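/- arXiv:1508.00978 — 10 statements merged into one kernel-verified Lean document; each statement's English description precedes it below -/
import Mathlib

section
/- Let q = 2am+1 be an odd prime power with a, m positive integers, and suppose 0 ≤ j, l ≤ (a+1)m − 1. If qj + l = t(q+1)/2 for a nonnegative integer t, then (q−1)/a does not divide t+1. -/
/-- For an odd prime power `q = 2am+1` with `a, m` positive integers, and
`0 ≤ j, l ≤ (a+1)m - 1`, if `qj + l = t(q+1)/2` for a nonnegative integer `t`, then
`(q-1)/a` does not divide `t+1`. -/
theorem key_divisibility_lemma_length_q_sq_sub_one_div_a
    (q a m : ℕ) (ha : 0 < a) (hm : 0 < m) (hq : q = 2 * a * m + 1) (hpp : IsPrimePow q)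
    (j l t : ℕ) (hj : j ≤ (a + 1) * m - 1) (hl : l ≤ (a + 1) * m - 1)
    (ht : q * j + l = t * ((q + 1) / 2)) :
    ¬ ((q - 1) / a ∣ t + 1) := by
  subst hq
  rintro ⟨s, hs⟩
  have hq1 : (2 * a * m + 1 - 1) / a = 2 * m := by
    rw [Nat.add_sub_cancel, show 2 * a * m = a * (2 * m) by ring,
      Nat.mul_div_cancel_left _ ha]
  rw [hq1] at hs
  have hq2 : (2 * a * m + 1 + 1) / 2 = a * m + 1 := by
    rw [show 2 * a * m = 2 * (a * m) by ring]
    omega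
  rw [hq2] at ht
  have hs1 : 1 ≤ s := by
    rcases Nat.eq_zero_or_pos s with rfl | h
    · simp at hs
    · exact h
  have hK : 0 < (a + 1) * m := Nat.mul_pos (Nat.succ_pos a) hm
  have hj2 : j + 1 ≤ (a + 1) * m := lt_of_le_of_lt hj (Nat.sub_lt hK one_pos)
  have hl2 : l + 1 ≤ (a + 1) * m := lt_of_le_of_lt hl (Nat.sub_lt hK one_pos)
  -- s ≤ a
  have hsa : s ≤ a := by
    by_contra h
    push_neg at h
    have h1 : m * (a + 1) ≤ m * s := Nat.mul_le_mul_left m h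
    have hb1 : 2 * m * (a + 1) ≤ t + 1 := by linarith
    have hb2 : 2 * m * (a + 1) * (a * m + 1) ≤ (t + 1) * (a * m + 1) :=
      Nat.mul_le_mul_right _ hb1
    have hb3 : (2 * a * m + 1) * (j + 1) ≤ (2 * a * m + 1) * ((a + 1) * m) :=
      Nat.mul_le_mul_left _ hj2
    nlinarith [ht, hl2, hm, ha]
  have hms : m * s ≤ m * a := Nat.mul_le_mul_left m hsa
  have hms1 : m ≤ m * s := Nat.le_mul_of_pos_right m hs1
  have hma : m ≤ a * m := Nat.le_mul_of_pos_left m ha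
  have hkey : (2 * a * m + 1) * j + (l + (a * m + 1)) =
      (2 * a * m + 1) * (s * m) + m * s := by
    have h1 : (2 * a * m + 1) * j + (l + (a * m + 1)) = (t + 1) * (a * m + 1) := by
      linarith [ht]
    rw [h1, hs]; ring
  have hmod : (l + (a * m + 1)) % (2 * a * m + 1) = (m * s) % (2 * a * m + 1) := by
    have := congrArg (· % (2 * a * m + 1)) hkey
    simpa [Nat.mul_add_mod] using this
  have hmslt : m * s < 2 * a * m + 1 := by linarith
  rw [Nat.mod_eq_of_lt hmslt] at hmod
  by_cases hcase : l + (a * m + 1) < 2 * a * m + 1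
  · rw [Nat.mod_eq_of_lt hcase] at hmod
    linarith
  · push_neg at hcase
    have hlt2 : l + (a * m + 1) - (2 * a * m + 1) < 2 * a * m + 1 := by
      zify [hcase]
      linarith
    rw [Nat.mod_eq_sub_mod hcase, Nat.mod_eq_of_lt hlt2] at hmod
    zify [hcase] at hmod
    -- l = m*s + a*m ≥ m + a*m = (a+1)m, contradicting hl2
    have hl2' : (l : ℤ) + 1 ≤ (a + 1) * m := by exact_mod_cast hl2
    have hms1' : (m : ℤ) ≤ m * s := by exact_mod_cast hms1
    linarith
end

section
/- Let q = 2am+1 be an odd prime power, ω a primitive element of F_{q^2}, n = (q^2−1)/a, and k with 1 ≤ k ≤ (a+1)m. Define a = (ω^a, ω^{2a}, ..., ω^{na}) and let v ∈ (F_{q^2}^*)^n be the vector obtained by repeating the pattern (ω^{q-1}, ω^{q-1}, ω^a, ω^a, ..., ω^{q-1-a}, ω^{q-1-a}), so that v_{2i-1} = v_{2i}. Then Σ_{i=1}^n v_i^{q+1} a_i^{qj+l} = 0 for all 0 ≤ j, l ≤ k−1, and hence GRS_k(a,v) ⊆ GRS_k(a,v)^{⊥H}. -/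
open Finset

private lemma sum_range_double {M : Type*} [AddCommMonoid M] (f : ℕ → M) (N : ℕ) :
    ∑ i ∈ Finset.range (2 * N), f i = ∑ p ∈ Finset.range N, (f (2 * p) + f (2 * p + 1)) := by
  induction N with
  | zero => simp
  | succ n ih =>
    rw [Finset.sum_range_succ, ← ih, show 2 * (n + 1) = (2 * n + 1) + 1 by ring,
      Finset.sum_range_succ, Finset.sum_range_succ, add_assoc]

private lemma no_sol (a m k j l s : ℤ) (ha : 1 ≤ a) (hm : 1 ≤ m) (hk1 : 1 ≤ k)
    (hk2 : k ≤ (a + 1) * m) (hj0 : 0 ≤ j) (hl0 : 0 ≤ l) (hs0 : 0 ≤ s)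
    (hj : j + 1 ≤ k) (hl : l + 1 ≤ k)
    (hs : (2 * a * m + 1) + 1 + 2 * ((2 * a * m + 1) * j + l)
        = 2 * m * ((2 * a * m + 1) + 1) * s) : False := by
  have hu : (2 * (a * m) + 2) * (1 + 2 * j - 2 * (m * s)) = 2 * j - 2 * l := by
    linear_combination hs
  have hb1 : j ≤ a * m + m - 1 := by nlinarith
  have hb2 : l ≤ a * m + m - 1 := by nlinarith
  have hmam : m ≤ a * m := by nlinarith
  have hu1 : 1 + 2 * j - 2 * (m * s) ≤ 1 := by nlinarith
  have hu2 : -1 ≤ 1 + 2 * j - 2 * (m * s) := by nlinarith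
  have hcases : 1 + 2 * j - 2 * (m * s) = -1 ∨ 1 + 2 * j - 2 * (m * s) = 0 ∨
      1 + 2 * j - 2 * (m * s) = 1 := by omega
  rcases hcases with hc | hc | hc
  · -- l = j + am + 1, m*s = j+1
    rw [hc] at hu
    have hl' : l = j + (a * m + 1) := by linarith
    have hms : m * s = j + 1 := by linarith [hc]
    have hs1 : 1 ≤ s := by
      rcases le_or_gt s 0 with h | h
      · have : m * s ≤ 0 := mul_nonpos_of_nonneg_of_nonpos (by linarith) h
        linarith
      · exact h
    have : m * 1 ≤ m * s := by
      apply mul_le_mul_of_nonneg_left hs1 (by linarith)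
    linarith
  · rw [hc] at hu
    have hjl : j = l := by linarith
    have h2 : 2 * (m * s) = 2 * j + 1 := by linarith [hc]
    generalize m * s = P at h2
    omega
  · -- j = l + am + 1, m*s = j
    rw [hc] at hu
    have hj' : j = l + (a * m + 1) := by linarith
    have hms : m * s = j := by linarith [hc]
    rcases le_or_gt s a with h | h
    · have h1 : m * s ≤ m * a := mul_le_mul_of_nonneg_left h (by linarith)
      have h2 : m * a = a * m := mul_comm m a
      linarith
    · have h1 : m * (a + 1) ≤ m * s := mul_le_mul_of_nonneg_left (by linarith) (by linarith)
      nlinarith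

/-- Let `q = 2am+1` be an odd prime power, `ω` a primitive element of `F_{q^2}`,
`n = (q^2-1)/a` and `1 ≤ k ≤ (a+1)m`. With `α = (ω^a, ω^{2a}, ..., ω^{na})` and `ν` the vector
listing the pairs `(ω^{q-1}, ω^{q-1}), (ω^a, ω^a), ..., (ω^{q-1-a}, ω^{q-1-a})` cyclically
(so that the pair of coordinates `2p+1, 2p+2` carries the value `ω^{a·(((p+c-1) mod c)+1)}`
where `c = (q-1)/a`), the sums `∑_i ν_i^{q+1} α_i^{qj+l}` vanish for all `0 ≤ j, l ≤ k-1`,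
and hence `GRS_k(α,ν) ⊆ GRS_k(α,ν)^{⊥H}`. -/
theorem GRS_self_orthogonal_length_q_sq_sub_one_div_a
    (q a m : ℕ) (ha : 0 < a) (hm : 0 < m) (hq : q = 2 * a * m + 1) (hpp : IsPrimePow q)
    (F : Type) [Field F] [Fintype F] (hF : Fintype.card F = q ^ 2)
    (ω : F) (hω : orderOf ω = q ^ 2 - 1)
    (k : ℕ) (hk1 : 1 ≤ k) (hk2 : k ≤ (a + 1) * m)
    (α ν : Fin ((q ^ 2 - 1) / a) → F)
    (hα : ∀ i, α i = ω ^ (a * ((i : ℕ) + 1)))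
    (hν : ∀ i, ν i = ω ^ (a * ((((i : ℕ) / 2 + (q - 1) / a - 1) % ((q - 1) / a)) + 1))) :
    (∀ j l : ℕ, j ≤ k - 1 → l ≤ k - 1 →
        ∑ i, (ν i) ^ (q + 1) * (α i) ^ (q * j + l) = 0) ∧
      ({c : Fin ((q ^ 2 - 1) / a) → F |
          ∃ f : Polynomial F, f.degree < k ∧ c = fun i => ν i * f.eval (α i)} ⊆
        {x : Fin ((q ^ 2 - 1) / a) → F |
          ∀ y ∈ {c : Fin ((q ^ 2 - 1) / a) → F |
              ∃ f : Polynomial F, f.degree < k ∧ c = fun i => ν i * f.eval (α i)},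
            ∑ i, x i * (y i) ^ q = 0}) := by
  have hqm1 : q - 1 = a * (2 * m) := by rw [hq, Nat.add_sub_cancel]; ring
  have hc : (q - 1) / a = 2 * m := by rw [hqm1, Nat.mul_div_cancel_left _ ha]
  have hD : q ^ 2 - 1 = 2 * a * m * (q + 1) := Nat.sub_eq_of_eq_add (by rw [hq]; ring)
  have hn : (q ^ 2 - 1) / a = 2 * (m * (q + 1)) := by
    rw [hD, show 2 * a * m * (q + 1) = a * (2 * (m * (q + 1))) by ring,
      Nat.mul_div_cancel_left _ ha]
  have hωD : ω ^ (q ^ 2 - 1) = 1 := by rw [← hω]; exact pow_orderOf_eq_one ω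
  have hmodeq : ∀ e e' : ℕ, e ≡ e' [MOD q ^ 2 - 1] → ω ^ e = ω ^ e' := by
    have key : ∀ e : ℕ, ω ^ e = ω ^ (e % (q ^ 2 - 1)) := by
      intro e
      conv_lhs => rw [← Nat.div_add_mod e (q ^ 2 - 1)]
      rw [pow_add, pow_mul, hωD, one_pow, one_mul]
    intro e e' h
    rw [key e, key e', h]
  simp only [hc] at hν
  have part1 : ∀ j l : ℕ, j ≤ k - 1 → l ≤ k - 1 →
      ∑ i, (ν i) ^ (q + 1) * (α i) ^ (q * j + l) = 0 := by
    intro j l hj hl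
    set t := q * j + l with ht
    set G : ℕ → F := fun i =>
      ω ^ (a * ((i / 2 + 2 * m - 1) % (2 * m) + 1) * (q + 1)) * ω ^ (a * (i + 1) * t) with hG
    have step1 : ∑ i, (ν i) ^ (q + 1) * (α i) ^ t
        = ∑ i ∈ Finset.range ((q ^ 2 - 1) / a), G i := by
      rw [← Fin.sum_univ_eq_sum_range]
      refine Finset.sum_congr rfl fun i _ => ?_
      rw [hν i, hα i, ← pow_mul, ← pow_mul]
    have hpair : ∀ p : ℕ, G (2 * p) + G (2 * p + 1)
        = (ω ^ (a * t) + ω ^ (a * (2 * t))) * (ω ^ (a * (q + 1 + 2 * t))) ^ p := by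
      intro p
      have hψ : ((p + 2 * m - 1) % (2 * m) + 1) ≡ p [MOD 2 * m] := by
        have h1 : (p + 2 * m - 1) % (2 * m) + 1 ≡ (p + 2 * m - 1) + 1 [MOD 2 * m] :=
          (Nat.mod_modEq _ _).add_right 1
        rw [show (p + 2 * m - 1) + 1 = p + 2 * m by omega] at h1
        exact h1.trans (Nat.add_modEq_right)
      have hm1 : a * ((p + 2 * m - 1) % (2 * m) + 1) * (q + 1) ≡ a * p * (q + 1)
          [MOD q ^ 2 - 1] := by
        have h2 := (hψ.mul_left' a).mul_right' (q + 1)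
        rwa [show a * (2 * m) * (q + 1) = q ^ 2 - 1 by rw [hD]; ring] at h2
      have e2p : G (2 * p) = ω ^ (a * t + a * (q + 1 + 2 * t) * p) := by
        show ω ^ (a * ((2 * p / 2 + 2 * m - 1) % (2 * m) + 1) * (q + 1)) *
          ω ^ (a * (2 * p + 1) * t) = _
        rw [show 2 * p / 2 = p by omega, ← pow_add]
        refine hmodeq _ _ ?_
        have h3 := hm1.add_right (a * (2 * p + 1) * t)
        rwa [show a * p * (q + 1) + a * (2 * p + 1) * t
          = a * t + a * (q + 1 + 2 * t) * p by ring] at h3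
      have e2p1 : G (2 * p + 1) = ω ^ (a * (2 * t) + a * (q + 1 + 2 * t) * p) := by
        show ω ^ (a * (((2 * p + 1) / 2 + 2 * m - 1) % (2 * m) + 1) * (q + 1)) *
          ω ^ (a * (2 * p + 1 + 1) * t) = _
        rw [show (2 * p + 1) / 2 = p by omega, ← pow_add]
        refine hmodeq _ _ ?_
        have h3 := hm1.add_right (a * (2 * p + 1 + 1) * t)
        rwa [show a * p * (q + 1) + a * (2 * p + 1 + 1) * t
          = a * (2 * t) + a * (q + 1 + 2 * t) * p by ring] at h3
      rw [e2p, e2p1, ← pow_mul, pow_add, pow_add, add_mul]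
    rw [show (q * j + l) = t from rfl] at *
    rw [step1, hn, sum_range_double,
      Finset.sum_congr rfl fun p _ => hpair p, ← Finset.mul_sum]
    have hζN : (ω ^ (a * (q + 1 + 2 * t))) ^ (m * (q + 1)) = 1 := by
      rw [← pow_mul, show a * (q + 1 + 2 * t) * (m * (q + 1))
        = (q ^ 2 - 1) * (a * m + 1 + t) by rw [hD, hq]; ring, pow_mul, hωD, one_pow]
    have hζ1 : ω ^ (a * (q + 1 + 2 * t)) ≠ 1 := by
      intro hζ
      have hdvd : (q ^ 2 - 1) ∣ a * (q + 1 + 2 * t) := by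
        rw [← hω]; exact orderOf_dvd_of_pow_eq_one hζ
      rw [hD] at hdvd
      have hdvd2 : 2 * m * (q + 1) ∣ q + 1 + 2 * t := by
        have h' : a * (2 * m * (q + 1)) ∣ a * (q + 1 + 2 * t) := by
          rwa [show a * (2 * m * (q + 1)) = 2 * a * m * (q + 1) by ring]
        exact (Nat.mul_dvd_mul_iff_left ha).mp h'
      obtain ⟨s, hs⟩ := hdvd2
      rw [ht] at hs
      refine no_sol (a : ℤ) (m : ℤ) (k : ℤ) (j : ℤ) (l : ℤ) (s : ℤ)
        (by exact_mod_cast ha) (by exact_mod_cast hm) (by exact_mod_cast hk1)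
        (by exact_mod_cast hk2) (Int.ofNat_nonneg j) (Int.ofNat_nonneg l)
        (Int.ofNat_nonneg s) (by omega) (by omega) ?_
      have hqZ : (q : ℤ) = 2 * (a : ℤ) * (m : ℤ) + 1 := by exact_mod_cast hq
      have hsZ : (q : ℤ) + 1 + 2 * ((q : ℤ) * (j : ℤ) + (l : ℤ))
          = 2 * (m : ℤ) * ((q : ℤ) + 1) * (s : ℤ) := by exact_mod_cast hs
      rw [hqZ] at hsZ
      exact hsZ
    rw [geom_sum_eq hζ1, hζN, sub_self, zero_div, mul_zero]
  refine ⟨part1, ?_⟩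
  -- characteristic facts
  obtain ⟨p, e, hp, he, hpe⟩ := hpp
  have hq0 : q ≠ 0 := by rw [hq]; exact Nat.succ_ne_zero _
  haveI hfact : Fact p.Prime := ⟨hp.nat_prime⟩
  have hcharF : CharP F p := by
    obtain ⟨r, hrI⟩ := CharP.exists F
    haveI := hrI
    obtain ⟨nn, hr, hcard⟩ := FiniteField.card F r
    have hrp : r = p := by
      have h1 : r ∣ p ^ (e * 2) := by
        have : r ∣ r ^ (nn : ℕ) := dvd_pow_self r nn.ne_zero
        rw [← hcard, hF, ← hpe, ← pow_mul] at this
        exact this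
      exact (Nat.prime_dvd_prime_iff_eq hr hp.nat_prime).mp (hr.dvd_of_dvd_pow h1)
    rwa [hrp] at hrI
  haveI := hcharF
  have hfrobadd : ∀ x y : F, (x + y) ^ q = x ^ q + y ^ q := by
    intro x y
    rw [← hpe]
    exact add_pow_char_pow (p := p) (n := e) x y
  have hfrobsum : ∀ (s : Finset ℕ) (h : ℕ → F), (∑ x ∈ s, h x) ^ q = ∑ x ∈ s, (h x) ^ q := by
    intro s h
    induction s using Finset.cons_induction with
    | empty => simp [zero_pow hq0]
    | cons b s hb ih => rw [Finset.sum_cons, Finset.sum_cons, hfrobadd, ih]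
  rintro x ⟨f, hf, rfl⟩ y ⟨g, hg, rfl⟩
  simp only
  have hfnd : f.natDegree < k := by
    by_cases h0 : f = 0
    · simpa [h0, Nat.pos_iff_ne_zero, Nat.one_le_iff_ne_zero] using hk1
    · exact (Polynomial.natDegree_lt_iff_degree_lt h0).mpr hf
  have hgnd : g.natDegree < k := by
    by_cases h0 : g = 0
    · simpa [h0, Nat.pos_iff_ne_zero, Nat.one_le_iff_ne_zero] using hk1
    · exact (Polynomial.natDegree_lt_iff_degree_lt h0).mpr hg
  have hterm : ∀ i, (ν i * f.eval (α i)) * (ν i * g.eval (α i)) ^ q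
      = ∑ jj ∈ Finset.range k, ∑ l ∈ Finset.range k,
          (g.coeff jj) ^ q * f.coeff l * ((ν i) ^ (q + 1) * (α i) ^ (q * jj + l)) := by
    intro i
    rw [Polynomial.eval_eq_sum_range' hfnd, Polynomial.eval_eq_sum_range' hgnd, mul_pow,
      hfrobsum]
    rw [show (ν i * ∑ l ∈ Finset.range k, f.coeff l * α i ^ l) *
        ((ν i) ^ q * ∑ jj ∈ Finset.range k, (g.coeff jj * α i ^ jj) ^ q)
      = (ν i) ^ (q + 1) * ((∑ jj ∈ Finset.range k, (g.coeff jj * α i ^ jj) ^ q) *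
        (∑ l ∈ Finset.range k, f.coeff l * α i ^ l)) by ring]
    rw [Finset.sum_mul_sum, Finset.mul_sum]
    refine Finset.sum_congr rfl fun jj _ => ?_
    rw [Finset.mul_sum]
    refine Finset.sum_congr rfl fun l _ => ?_
    rw [mul_pow, ← pow_mul, mul_comm jj q, pow_add]
    ring
  rw [Finset.sum_congr rfl fun i _ => hterm i, Finset.sum_comm]
  refine Finset.sum_eq_zero fun jj hjj => ?_
  rw [Finset.sum_comm]
  refine Finset.sum_eq_zero fun l hl => ?_
  have hjj' := Finset.mem_range.mp hjj
  have hl' := Finset.mem_range.mp hl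
  rw [← Finset.mul_sum, part1 jj l (by omega) (by omega), mul_zero]
end

section
/- Let q be an odd prime power. Then for every d with 2 ≤ d ≤ q there exists a Hermitian self-orthogonal MDS code over F_{q^2} with parameters [q^2−1, d−1, q^2−d+1]; consequently there exists a q-ary quantum MDS code with parameters [[q^2−1, q^2−2d+1, d]]. -/
/-!
The code is the generalized Reed–Solomon code `{(v_α f(α))_{α ∈ F^×} : deg f < k}`, which is
MDS because a nonzero `f` has fewer than `k` roots. Its Hermitian Gram matrix has entries
`∑_α v_α^(q+1) α^(i + q i')`, `i, i' < k`. Choose `v_α` with `v_α^(q+1) = y + y^q` for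
`y = a α^(q-1)`: the trace `y + y^q` lies in `F_q`, the norm `v ↦ v^(q+1)` maps `F^×` onto
`F_q^×`, and for `q` odd a suitable `a` (a power of a nonsquare) keeps the trace nonzero.
Each Gram entry then splits into two power sums `∑_α α^M`, which vanish because `q^2 - 1 ∤ M`:
the exponent `i + q i'` has base-`q` digits at most `q - 2`, so it never equals `q - 1`.
-/

open Polynomial Finset Matrix

theorem IsCyclic.exists_pow_eq_of_pow_eq_one {G : Type*} [Group G] [Finite G] [IsCyclic G]
    {k n : ℕ} (hG : Nat.card G = k * n) {x : G} (hx : x ^ n = 1) : ∃ y : G, y ^ k = x := by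
  obtain ⟨g, hg⟩ := IsCyclic.exists_monoid_generator (α := G)
  obtain ⟨t, rfl⟩ := Submonoid.mem_powers_iff _ _ |>.mp (hg x)
  have hn : 0 < n := Nat.pos_of_mul_pos_left (hG ▸ Nat.card_pos)
  have hdvd : k * n ∣ t * n := by
    rw [← hG, ← orderOf_eq_card_of_forall_mem_powers hg, ← pow_mul] at *
    exact orderOf_dvd_of_pow_eq_one hx
  obtain ⟨s, rfl⟩ := Nat.dvd_of_mul_dvd_mul_right hn hdvd
  exact ⟨g ^ s, by rw [← pow_mul, mul_comm]⟩

theorem Nat.not_sq_sub_one_dvd_sub_one_add {q i i' : ℕ} (hi : i < q - 1) (hi' : i' < q - 1) :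
    ¬q ^ 2 - 1 ∣ q - 1 + (i + q * i') := by
  obtain ⟨r, rfl⟩ : ∃ r, q = r + 2 := ⟨q - 2, by omega⟩
  have h1 : (r + 2) * i' ≤ (r + 2) * r := Nat.mul_le_mul_left _ (by omega)
  have h2 : (r + 2) ^ 2 = (r + 2) * r + 2 * r + 4 := by ring
  exact Nat.not_dvd_of_pos_of_lt (by omega) (by omega)

theorem Nat.not_sq_sub_one_dvd_mul_sub_one_add {q i i' : ℕ} (hi : i < q - 1)
    (hi' : i' < q - 1) : ¬q ^ 2 - 1 ∣ q * (q - 1) + (i + q * i') := by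
  obtain ⟨r, rfl⟩ : ∃ r, q = r + 2 := ⟨q - 2, by omega⟩
  have h1 : (r + 2) * i' ≤ (r + 2) * r := Nat.mul_le_mul_left _ (by omega)
  have h2 : (r + 2) ^ 2 = (r + 2) * r + 2 * r + 4 := by ring
  have h3 : (r + 2) * (r + 2 - 1) = (r + 2) * r + r + 2 := by
    rw [show r + 2 - 1 = r + 1 by omega]; ring
  rcases Nat.eq_zero_or_pos i' with rfl | hpos
  · exact Nat.not_dvd_of_pos_of_lt (by omega) (by omega)
  · have h4 : r + 2 ≤ (r + 2) * i' := Nat.le_mul_of_pos_right _ hpos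
    exact Nat.not_dvd_of_lt_of_lt_mul_succ (k := 1) (by omega) (by omega)

section SelfOrthogonal

variable {F ι : Type*} [CommSemiring F] [Fintype ι] {k : ℕ}

theorem sum_mul_map_eq_zero_of_mul_transpose_map_eq_zero (σ : F →+* F)
    (G : Matrix (Fin k) ι F) (hG : G * (G.map σ)ᵀ = 0) {x y : ι → F}
    (hx : x ∈ LinearMap.range G.vecMulLinear) (hy : y ∈ LinearMap.range G.vecMulLinear) :
    ∑ j, x j * σ (y j) = 0 := by
  obtain ⟨c, rfl⟩ := hx
  obtain ⟨c', rfl⟩ := hy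
  have hσy : σ ∘ (c' ᵥ* G) = (G.map σ)ᵀ *ᵥ (σ ∘ c') := by
    ext j
    rw [Function.comp_apply, RingHom.map_vecMul, ← vecMul_transpose, transpose_transpose]
  change (c ᵥ* G) ⬝ᵥ (σ ∘ (c' ᵥ* G)) = 0
  rw [hσy, dotProduct_mulVec, vecMul_vecMul, hG, vecMul_zero, zero_dotProduct]

end SelfOrthogonal

section GeneralizedReedSolomon

variable {F ι : Type*} [Field F] {ε w : ι → F} {k : ℕ}

def grsGeneratorMatrix (ε w : ι → F) (k : ℕ) : Matrix (Fin k) ι F :=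
  Matrix.of fun i j => w j * ε j ^ (i : ℕ)

def grsCode (ε w : ι → F) (k : ℕ) : Submodule F (ι → F) :=
  LinearMap.range (grsGeneratorMatrix ε w k).vecMulLinear

theorem vecMul_grsGeneratorMatrix (c : Fin k → F) :
    c ᵥ* grsGeneratorMatrix ε w k =
      fun j => w j * eval (ε j) ((degreeLTEquiv F k).symm c : F[X]) := by
  ext j
  set p := (degreeLTEquiv F k).symm c
  rw [eval_eq_sum_degreeLTEquiv p.2, Subtype.coe_eta, LinearEquiv.apply_symm_apply, mul_sum]
  simp only [vecMul, dotProduct, grsGeneratorMatrix, of_apply]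
  exact sum_congr rfl fun i _ => by ring

theorem mem_grsCode {x : ι → F} :
    x ∈ grsCode ε w k ↔ ∃ p ∈ degreeLT F k, x = fun j => w j * eval (ε j) p := by
  constructor
  · rintro ⟨c, rfl⟩
    exact ⟨_, ((degreeLTEquiv F k).symm c).2, vecMul_grsGeneratorMatrix c⟩
  · rintro ⟨p, hp, rfl⟩
    refine ⟨degreeLTEquiv F k ⟨p, hp⟩, ?_⟩
    simp [vecMul_grsGeneratorMatrix]

variable [Fintype ι]

theorem grsGeneratorMatrix_mul_transpose_map_apply (σ : F →+* F) (i i' : Fin k) :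
    (grsGeneratorMatrix ε w k * ((grsGeneratorMatrix ε w k).map σ)ᵀ) i i' =
      ∑ j, w j * σ (w j) * (ε j ^ (i : ℕ) * σ (ε j) ^ (i' : ℕ)) := by
  simp only [mul_apply, transpose_apply, map_apply, grsGeneratorMatrix, of_apply, map_mul, map_pow]
  exact sum_congr rfl fun j _ => by ring

variable [DecidableEq F]

theorem hammingNorm_mul_eval (hw : ∀ j, w j ≠ 0) (p : F[X]) :
    hammingNorm (fun j => w j * eval (ε j) p) = Fintype.card ι - #{j | p.IsRoot (ε j)} := by
  have hsplit := card_filter_add_card_filter_not (s := univ) fun j => p.IsRoot (ε j)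
  have hnonroot : hammingNorm (fun j => w j * eval (ε j) p) = #{j | ¬p.IsRoot (ε j)} := by
    simp only [hammingNorm, ne_eq, mul_eq_zero, hw, false_or, IsRoot.def]
  rw [card_univ] at hsplit
  omega

theorem card_filter_isRoot_le (hε : Function.Injective ε) {p : F[X]} (hp : p ≠ 0) :
    #{j | p.IsRoot (ε j)} ≤ p.natDegree := by
  rw [← card_image_of_injective _ hε]
  refine card_le_degree_of_subset_roots fun z hz => ?_
  obtain ⟨j, hj, rfl⟩ := mem_image.mp hz
  exact (mem_roots hp).mpr (mem_filter.mp hj).2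

theorem card_sub_natDegree_le_hammingNorm (hε : Function.Injective ε) (hw : ∀ j, w j ≠ 0)
    {p : F[X]} (hp : p ≠ 0) :
    Fintype.card ι - p.natDegree ≤ hammingNorm (fun j => w j * eval (ε j) p) := by
  rw [hammingNorm_mul_eval hw]
  have := card_filter_isRoot_le hε hp
  omega

theorem finrank_grsCode (hε : Function.Injective ε) (hw : ∀ j, w j ≠ 0)
    (hk : k ≤ Fintype.card ι) : Module.finrank F (grsCode ε w k) = k := by
  rw [grsCode, LinearMap.finrank_range_of_inj, Module.finrank_fin_fun]
  refine (injective_iff_map_eq_zero _).mpr fun c hc => ?_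
  set p := (degreeLTEquiv F k).symm c
  suffices (p : F[X]) = 0 by
    simpa [p] using congrArg (degreeLTEquiv F k) (show p = 0 from Subtype.ext this)
  by_contra hp
  have hdeg := (natDegree_lt_iff_degree_lt hp).mpr (mem_degreeLT.mp p.2)
  have hweight := card_sub_natDegree_le_hammingNorm hε hw hp
  rw [← vecMul_grsGeneratorMatrix] at hweight
  simp only [vecMulLinear_apply] at hc
  rw [hc, hammingNorm_zero] at hweight
  omega

theorem le_hammingNorm_of_mem_grsCode (hε : Function.Injective ε) (hw : ∀ j, w j ≠ 0)
    (hk : k ≤ Fintype.card ι) {x : ι → F} (hx : x ∈ grsCode ε w k) (hx0 : x ≠ 0) :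
    Fintype.card ι - k + 1 ≤ hammingNorm x := by
  obtain ⟨p, hpk, rfl⟩ := mem_grsCode.mp hx
  have hp : p ≠ 0 := by rintro rfl; exact hx0 (by ext; simp)
  have hdeg := (natDegree_lt_iff_degree_lt hp).mpr (mem_degreeLT.mp hpk)
  have := card_sub_natDegree_le_hammingNorm hε hw hp
  omega

theorem exists_hammingNorm_eq_of_grsCode (hε : Function.Injective ε) (hw : ∀ j, w j ≠ 0)
    (hk0 : 0 < k) (hk : k ≤ Fintype.card ι) :
    ∃ x ∈ grsCode ε w k, x ≠ 0 ∧ hammingNorm x = Fintype.card ι - k + 1 := by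
  obtain ⟨S, -, hS⟩ := exists_subset_card_eq (s := (univ : Finset ι)) (n := k - 1)
    (by rw [card_univ]; omega)
  set p : F[X] := ∏ j ∈ S, (X - C (ε j))
  have hroot : ∀ j, p.IsRoot (ε j) ↔ j ∈ S := by
    intro j
    simp [p, IsRoot.def, eval_prod, prod_eq_zero_iff, sub_eq_zero, hε.eq_iff]
  have hpk : p ∈ degreeLT F k := by
    have hmonic : p.Monic := monic_prod_of_monic _ _ fun j _ => monic_X_sub_C (ε j)
    rw [mem_degreeLT, degree_eq_natDegree hmonic.ne_zero, natDegree_finsetProd_X_sub_C_eq_card, hS]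
    exact_mod_cast (by omega : k - 1 < k)
  have hroots : ({j | p.IsRoot (ε j)} : Finset ι) = S := by
    ext j
    simp only [mem_filter, mem_univ, true_and]
    exact hroot j
  have hweight : hammingNorm (fun j => w j * eval (ε j) p) = Fintype.card ι - k + 1 := by
    rw [hammingNorm_mul_eval hw, hroots, hS]
    omega
  refine ⟨_, mem_grsCode.mpr ⟨p, hpk, rfl⟩, ?_, hweight⟩
  rintro h
  rw [h, hammingNorm_zero] at hweight
  omega

end GeneralizedReedSolomon

section SquareOrderField

variable {F : Type*} [Field F] [Fintype F] {q : ℕ}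

theorem exists_ringHom_eq_pow_of_card_eq_sq (hF : Fintype.card F = q ^ 2) :
    ∃ σ : F →+* F, ∀ x, σ x = x ^ q := by
  have := ringChar.charP F
  have hp := CharP.char_is_prime F (ringChar F)
  have := Fact.mk hp
  obtain ⟨n, -, hn⟩ := FiniteField.card F (ringChar F)
  have hdvd : q ∣ ringChar F ^ (n : ℕ) := hn ▸ hF ▸ dvd_pow_self q two_ne_zero
  obtain ⟨e, -, rfl⟩ := (Nat.dvd_prime_pow hp).mp hdvd
  exact ⟨iterateFrobenius F (ringChar F) e, iterateFrobenius_def _ _⟩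

theorem ringChar_ne_two_of_card_eq_sq (hF : Fintype.card F = q ^ 2) (hq : Odd q) :
    ringChar F ≠ 2 := by
  have := Nat.odd_iff.mp (hq.pow (n := 2))
  rw [Ne, FiniteField.even_card_iff_char_two, hF]
  omega

theorem add_pow_pow_eq_self (hF : Fintype.card F = q ^ 2) (y : F) :
    (y + y ^ q) ^ q = y + y ^ q := by
  obtain ⟨σ, hσ⟩ := exists_ringHom_eq_pow_of_card_eq_sq hF
  rw [← hσ, map_add, hσ, hσ, ← pow_mul, ← sq, ← hF, FiniteField.pow_card, add_comm]

theorem exists_pow_succ_eq_of_pow_eq_self (hF : Fintype.card F = q ^ 2) {u : F} (hu : u ≠ 0)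
    (huq : u ^ q = u) : ∃ v : F, v ≠ 0 ∧ v ^ (q + 1) = u := by
  have hq : 1 ≤ q := by
    have := Fintype.one_lt_card (α := F)
    rw [hF] at this
    exact Nat.pos_of_ne_zero (by rintro rfl; simp at this)
  have hcard : Nat.card Fˣ = (q + 1) * (q - 1) := by
    rw [Nat.card_units, Nat.card_eq_fintype_card, hF]
    simpa using Nat.sq_sub_sq q 1
  have hu1 : Units.mk0 u hu ^ (q - 1) = 1 := by
    ext
    rw [Units.val_pow_eq_pow_val, Units.val_mk0, Units.val_one]
    refine mul_right_cancel₀ hu ?_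
    rw [← pow_succ, Nat.sub_add_cancel hq, huq, one_mul]
  obtain ⟨v, hv⟩ := IsCyclic.exists_pow_eq_of_pow_eq_one hcard hu1
  exact ⟨v, v.ne_zero, by simpa using congrArg Units.val hv⟩

/-- A trace-zero `y ≠ 0` has `y^(q-1) = -1`, hence quadratic character `(-1)^((q+1)/2)`, while
`y = a α^(q-1)` has the character of `a`, which is `(-1)^((q-1)/2)` for `a = b^((q-1)/2)` with `b`
a nonsquare. -/
theorem exists_forall_add_pow_ne_zero (hF : Fintype.card F = q ^ 2) (hq : Odd q) :
    ∃ a : F, ∀ α : F, α ≠ 0 → a * α ^ (q - 1) + (a * α ^ (q - 1)) ^ q ≠ 0 := by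
  have hchar := ringChar_ne_two_of_card_eq_sq hF hq
  obtain ⟨m, rfl⟩ := hq
  have hhalf : Fintype.card F / 2 = 2 * m * (m + 1) := by
    rw [hF, show (2 * m + 1) ^ 2 = 2 * (2 * m * (m + 1)) + 1 by ring]
    generalize 2 * m * (m + 1) = h
    omega
  obtain ⟨b, hb⟩ := FiniteField.exists_nonsquare hchar
  have hb0 : b ≠ 0 := by rintro rfl; exact hb IsSquare.zero
  have hbh : b ^ (2 * m * (m + 1)) = -1 := by
    rw [← hhalf]
    exact (FiniteField.pow_dichotomy hchar hb0).resolve_left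
      (mt (FiniteField.isSquare_iff hchar hb0).mpr hb)
  refine ⟨b ^ m, fun α hα htr => ?_⟩
  rw [Nat.add_sub_cancel] at htr
  set y := b ^ m * α ^ (2 * m)
  have hy0 : y ≠ 0 := mul_ne_zero (pow_ne_zero _ hb0) (pow_ne_zero _ hα)
  have hy : y ^ (2 * m) = -1 := by
    refine mul_right_cancel₀ hy0 ?_
    rw [← pow_succ, neg_one_mul]
    exact eq_neg_of_add_eq_zero_right htr
  have hα1 : α ^ (4 * m * (m + 1)) = 1 := by
    have := FiniteField.pow_card_sub_one_eq_one α hα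
    rwa [hF, show (2 * m + 1) ^ 2 - 1 = 4 * m * (m + 1) by
      rw [show (2 * m + 1) ^ 2 = 4 * m * (m + 1) + 1 by ring, Nat.add_sub_cancel]] at this
  have hsign : (-1 : F) ^ m = (-1) ^ m * -1 := calc
    (-1 : F) ^ m = (b ^ (2 * m * (m + 1))) ^ m * (α ^ (4 * m * (m + 1))) ^ m := by
      rw [hbh, hα1, one_pow, mul_one]
    _ = (y ^ (2 * m)) ^ (m + 1) := by ring
    _ = (-1) ^ m * -1 := by rw [hy, pow_succ]
  have hneg : (-1 : F) = 1 :=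
    mul_left_cancel₀ (pow_ne_zero m (neg_ne_zero.mpr one_ne_zero))
      (hsign.symm.trans (mul_one _).symm)
  exact hchar (neg_one_eq_one_iff.mp hneg)

theorem grsGeneratorMatrix_mul_transpose_map_eq_zero {ι : Type*} [Fintype ι]
    (hF : Fintype.card F = q ^ 2) (e : ι ≃ Fˣ) {σ : F →+* F} (hσ : ∀ x, σ x = x ^ q)
    {a : F} {w : ι → F}
    (hw : ∀ j, w j ^ (q + 1) = a * (e j : F) ^ (q - 1) + (a * (e j : F) ^ (q - 1)) ^ q)
    {k : ℕ} (hkq : k < q) :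
    grsGeneratorMatrix (fun j => (e j : F)) w k *
      ((grsGeneratorMatrix (fun j => (e j : F)) w k).map σ)ᵀ = 0 := by
  classical
  have hpowsum : ∀ M, ¬q ^ 2 - 1 ∣ M → ∑ j, (e j : F) ^ M = 0 := by
    intro M hM
    rw [e.sum_comp (fun α : Fˣ => (α : F) ^ M), FiniteField.sum_pow_units, hF, if_neg hM]
  ext i i'
  have hterm : ∀ j, w j * σ (w j) * ((e j : F) ^ (i : ℕ) * σ (e j) ^ (i' : ℕ)) =
      a * (e j : F) ^ (q - 1 + (i + q * i')) +
        a ^ q * (e j : F) ^ (q * (q - 1) + (i + q * i')) := by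
    intro j
    rw [hσ, hσ, ← pow_succ', hw j]
    ring
  rw [grsGeneratorMatrix_mul_transpose_map_apply, sum_congr rfl fun j _ => hterm j,
    sum_add_distrib, ← mul_sum, ← mul_sum,
    hpowsum _ (Nat.not_sq_sub_one_dvd_sub_one_add (by omega) (by omega)),
    hpowsum _ (Nat.not_sq_sub_one_dvd_mul_sub_one_add (by omega) (by omega))]
  simp

end SquareOrderField

theorem exists_hermitian_selfOrthogonal_mds_code {F : Type*} [Field F] [Fintype F]
    [DecidableEq F] {q : ℕ} (hF : Fintype.card F = q ^ 2) (hq : Odd q) {k : ℕ} (hk0 : 0 < k)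
    (hkq : k < q) :
    ∃ C : Submodule F (Fin (q ^ 2 - 1) → F),
      Module.finrank F C = k ∧
      (∀ x ∈ C, x ≠ 0 → q ^ 2 - 1 - k + 1 ≤ hammingNorm x) ∧
      (∃ x ∈ C, x ≠ 0 ∧ hammingNorm x = q ^ 2 - 1 - k + 1) ∧
      (∀ x ∈ C, ∀ y ∈ C, ∑ i, x i * (y i) ^ q = 0) := by
  obtain ⟨σ, hσ⟩ := exists_ringHom_eq_pow_of_card_eq_sq hF
  obtain ⟨a, ha⟩ := exists_forall_add_pow_ne_zero hF hq
  let e : Fin (q ^ 2 - 1) ≃ Fˣ :=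
    (Fintype.equivFinOfCardEq (by rw [Fintype.card_units, hF])).symm
  set ε : Fin (q ^ 2 - 1) → F := fun j => (e j : F)
  have hε : Function.Injective ε := Units.val_injective.comp e.injective
  have hmult : ∀ j, ∃ v : F, v ≠ 0 ∧
      v ^ (q + 1) = a * ε j ^ (q - 1) + (a * ε j ^ (q - 1)) ^ q :=
    fun j => exists_pow_succ_eq_of_pow_eq_self hF (ha _ (e j).ne_zero) (add_pow_pow_eq_self hF _)
  choose w hw0 hw using hmult
  have hkn : k ≤ Fintype.card (Fin (q ^ 2 - 1)) := by
    have := Nat.le_self_pow two_ne_zero q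
    rw [Fintype.card_fin]
    omega
  have hgram := grsGeneratorMatrix_mul_transpose_map_eq_zero hF e hσ hw hkq
  refine ⟨grsCode ε w k, finrank_grsCode hε hw0 hkn, ?_, ?_, ?_⟩
  · simpa only [Fintype.card_fin] using
      fun x => le_hammingNorm_of_mem_grsCode hε hw0 hkn (x := x)
  · simpa only [Fintype.card_fin] using exists_hammingNorm_eq_of_grsCode hε hw0 hk0 hkn
  · intro x hx y hy
    simpa only [hσ] using sum_mul_map_eq_zero_of_mul_transpose_map_eq_zero σ _ hgram hx hy

theorem quantum_MDS_length_q_sq_sub_one_general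
    (q : ℕ) (hodd : Odd q)
    (F : Type) [Field F] [Fintype F] [DecidableEq F] (hF : Fintype.card F = q ^ 2)
    (QMDS : ℕ → ℕ → ℕ → Prop)
    (hherm : ∀ (n k : ℕ) (C : Submodule F (Fin n → F)),
      Module.finrank F C = k →
      (∀ x ∈ C, x ≠ 0 → n - k + 1 ≤ hammingNorm x) →
      (∃ x ∈ C, x ≠ 0 ∧ hammingNorm x = n - k + 1) →
      (∀ x ∈ C, ∀ y ∈ C, ∑ i, x i * (y i) ^ q = 0) →
      QMDS n (n - 2 * k) (k + 1)) :
    ∀ d : ℕ, 2 ≤ d → d ≤ q →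
      (∃ C : Submodule F (Fin (q ^ 2 - 1) → F),
        Module.finrank F C = d - 1 ∧
        (∀ x ∈ C, x ≠ 0 → q ^ 2 - d + 1 ≤ hammingNorm x) ∧
        (∃ x ∈ C, x ≠ 0 ∧ hammingNorm x = q ^ 2 - d + 1) ∧
        (∀ x ∈ C, ∀ y ∈ C, ∑ i, x i * (y i) ^ q = 0)) ∧
      QMDS (q ^ 2 - 1) (q ^ 2 - 2 * d + 1) d := by
  intro d hd2 hdq
  obtain ⟨C, hrank, hmin, hexact, horth⟩ :=
    exists_hermitian_selfOrthogonal_mds_code hF hodd (k := d - 1) (by omega) (by omega)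
  have hdq2 : 2 * d ≤ q ^ 2 := by nlinarith
  have hlen : q ^ 2 - 1 - (d - 1) + 1 = q ^ 2 - d + 1 := by omega
  have hquantum := hherm _ _ C hrank hmin hexact horth
  rw [hlen] at hmin hexact
  refine ⟨⟨C, hrank, hmin, hexact, horth⟩, ?_⟩
  rwa [show q ^ 2 - 1 - 2 * (d - 1) = q ^ 2 - 2 * d + 1 by omega,
    Nat.sub_add_cancel (by omega : 1 ≤ d)] at hquantum

/-- Let `q` be an odd prime power. For every `d` with `2 ≤ d ≤ q` there exists a
Hermitian self-orthogonal MDS code over `F_{q^2}` with parameters `[q^2-1, d-1, q^2-d+1]`;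
consequently (assuming the Hermitian construction, taken as the hypothesis `hherm` turning any
Hermitian self-orthogonal `[n,k,n-k+1]` MDS code into an `[[n, n-2k, k+1]]_q` quantum MDS code,
where `QMDS n k d` denotes the existence of an `[[n,k,d]]_q` quantum MDS code) there exists a
`q`-ary quantum MDS code with parameters `[[q^2-1, q^2-2d+1, d]]`. -/
theorem quantum_MDS_length_q_sq_sub_one
    (q : ℕ) (hq : IsPrimePow q) (hodd : Odd q)
    (F : Type) [Field F] [Fintype F] [DecidableEq F] (hF : Fintype.card F = q ^ 2)
    (QMDS : ℕ → ℕ → ℕ → Prop)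
    (hherm : ∀ (n k : ℕ) (C : Submodule F (Fin n → F)),
      Module.finrank F C = k →
      (∀ x ∈ C, x ≠ 0 → n - k + 1 ≤ hammingNorm x) →
      (∃ x ∈ C, x ≠ 0 ∧ hammingNorm x = n - k + 1) →
      (∀ x ∈ C, ∀ y ∈ C, ∑ i, x i * (y i) ^ q = 0) →
      QMDS n (n - 2 * k) (k + 1)) :
    ∀ d : ℕ, 2 ≤ d → d ≤ q →
      (∃ C : Submodule F (Fin (q ^ 2 - 1) → F),
        Module.finrank F C = d - 1 ∧
        (∀ x ∈ C, x ≠ 0 → q ^ 2 - d + 1 ≤ hammingNorm x) ∧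
        (∃ x ∈ C, x ≠ 0 ∧ hammingNorm x = q ^ 2 - d + 1) ∧
        (∀ x ∈ C, ∀ y ∈ C, ∑ i, x i * (y i) ^ q = 0)) ∧
      QMDS (q ^ 2 - 1) (q ^ 2 - 2 * d + 1) d :=
  quantum_MDS_length_q_sq_sub_one_general q hodd F hF QMDS hherm
end

section
/- Let q be a prime power and A an (n−1)×n matrix over F_{q^2} of rank n−1. Then the equation Ax = 0 has a nonzero solution x with all coordinates in F_q if and only if A^{(q)} and A are row equivalent, where A^{(q)} is obtained from A by raising every entry to the q-th power. -/
/-!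
Let `φ` be the Frobenius `a ↦ a ^ q`, an involution of `F` since `card F = q ^ 2`. As `A` has full
row rank, `A.map φ = M * A` with `M` invertible iff `A` and `A.map φ` have the same kernel, i.e. iff
the line `ker A` is stable under applying `φ` coordinatewise. A nonzero `φ`-fixed vector of `ker A`
spans it, so the line is stable; conversely, on a stable line the trace `v + φ ∘ v` gives a nonzero
fixed vector unless `φ` is the identity.
-/

open Matrix Module LinearMap

theorem LinearMap.exists_comp_eq_of_ker_le {K V V₁ V₂ : Type*} [DivisionRing K] [AddCommGroup V]
    [Module K V] [AddCommGroup V₁] [Module K V₁] [AddCommGroup V₂] [Module K V₂]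
    {f : V →ₗ[K] V₁} {g : V →ₗ[K] V₂} (h : ker f ≤ ker g) : ∃ e : V₁ →ₗ[K] V₂, e ∘ₗ f = g := by
  obtain ⟨e, he⟩ :=
    LinearMap.exists_extend ((ker f).liftQ g h ∘ₗ f.quotKerEquivRange.symm.toLinearMap)
  refine ⟨e, LinearMap.ext fun v => ?_⟩
  simpa [quotKerEquivRange_symm_apply_image] using LinearMap.congr_fun he ⟨f v, mem_range_self f v⟩

namespace Matrix

variable {m n K : Type*} [Fintype m] [Fintype n] [DecidableEq m] [Field K]

theorem exists_mul_eq_of_ker_mulVecLin_le {A B : Matrix m n K}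
    (h : ker A.mulVecLin ≤ ker B.mulVecLin) : ∃ M : Matrix m m K, B = M * A := by
  classical
  obtain ⟨e, he⟩ := LinearMap.exists_comp_eq_of_ker_le h
  refine ⟨LinearMap.toMatrix' e, toLin'.injective ?_⟩
  simp only [toLin'_apply', mulVecLin_mul]
  rw [← toLin'_apply' (toMatrix' e), toLin'_toMatrix', he]

theorem isUnit_of_card_le_rank {M : Matrix m m K} (h : Fintype.card m ≤ M.rank) : IsUnit M := by
  rw [← mulVec_surjective_iff_isUnit, ← coe_mulVecLin, ← range_eq_top]
  exact Submodule.eq_top_of_finrank_eq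
    ((Submodule.finrank_le _).antisymm ((finrank_fintype_fun_eq_card K).trans_le h))

theorem ker_mulVecLin_mul_of_isUnit {M : Matrix m m K} (hM : IsUnit M) (A : Matrix m n K) :
    ker (M * A).mulVecLin = ker A.mulVecLin := by
  rw [mulVecLin_mul, ker_comp, ker_eq_bot.mpr (mulVec_injective_iff_isUnit.mpr hM),
    Submodule.comap_bot]

theorem exists_isUnit_mul_eq_iff_ker_mulVecLin_eq {A B : Matrix m n K}
    (hA : A.rank = Fintype.card m) :
    (∃ M : Matrix m m K, IsUnit M ∧ B = M * A) ↔ ker A.mulVecLin = ker B.mulVecLin := by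
  constructor
  · rintro ⟨M, hM, rfl⟩
    exact (ker_mulVecLin_mul_of_isUnit hM A).symm
  · intro h
    obtain ⟨M, rfl⟩ := exists_mul_eq_of_ker_mulVecLin_le h.le
    obtain ⟨N, hN⟩ := exists_mul_eq_of_ker_mulVecLin_le h.ge
    refine ⟨M, isUnit_of_card_le_rank ?_, rfl⟩
    calc Fintype.card m = (N * (M * A)).rank := by rw [← hN, hA]
      _ ≤ (M * A).rank := rank_mul_le_right _ _
      _ ≤ M.rank := rank_mul_le_left _ _

end Matrix

section Involution

variable {K : Type*} [Field K] {φ : K →+* K}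

theorem Matrix.mulVec_map_eq_zero_iff {m n : Type*} [Fintype n] (hφ : Function.Involutive φ)
    (A : Matrix m n K) (v : n → K) : A.map φ *ᵥ v = 0 ↔ A *ᵥ (φ ∘ v) = 0 := by
  have hv : A.map φ *ᵥ v = φ ∘ (A *ᵥ (φ ∘ v)) := by
    ext i
    rw [Function.comp_apply, RingHom.map_mulVec, ← Function.comp_assoc, hφ.comp_self,
      Function.id_comp]
  simp only [hv, funext_iff, Function.comp_apply, Pi.zero_apply, map_eq_zero]

theorem Matrix.ker_mulVecLin_eq_ker_map_iff {m n : Type*} [Fintype n] (hφ : Function.Involutive φ)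
    (A : Matrix m n K) :
    ker A.mulVecLin = ker (A.map φ).mulVecLin ↔ ∀ v ∈ ker A.mulVecLin, φ ∘ v ∈ ker A.mulVecLin := by
  have hmem : ∀ v, v ∈ ker (A.map φ).mulVecLin ↔ φ ∘ v ∈ ker A.mulVecLin := fun v =>
    mulVec_map_eq_zero_iff hφ A v
  constructor
  · intro h v hv
    rwa [← hmem, ← h]
  · intro h
    ext v
    refine ⟨fun hv => (hmem v).mpr (h v hv), fun hv => ?_⟩
    simpa [← Function.comp_assoc, hφ.comp_self] using h _ ((hmem v).mp hv)

theorem Submodule.exists_ne_zero_comp_eq_self {ι : Type*} (hφ : Function.Involutive φ)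
    {L : Submodule K (ι → K)} (hL : L ≠ ⊥) (hstable : ∀ v ∈ L, φ ∘ v ∈ L) :
    ∃ x ∈ L, x ≠ 0 ∧ φ ∘ x = x := by
  obtain ⟨y, hy, hy0⟩ := (Submodule.ne_bot_iff L).mp hL
  -- `v + φ ∘ v` is `φ`-fixed; if it vanishes on all of `K ∙ y`, then `φ = id`
  by_cases hT : ∃ a : K, a • y + φ ∘ (a • y) ≠ 0
  · obtain ⟨a, ha⟩ := hT
    refine ⟨a • y + φ ∘ (a • y), L.add_mem (L.smul_mem a hy) (hstable _ (L.smul_mem a hy)), ha, ?_⟩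
    ext i
    simp only [Pi.add_apply, Function.comp_apply, Pi.smul_apply, smul_eq_mul, map_add, map_mul,
      hφ a, hφ (y i)]
    ring
  · push Not at hT
    have hsmul : ∀ a : K, φ ∘ (a • y) = φ a • (φ ∘ y) := fun a => by ext; simp
    have hy' : φ ∘ y = -y := by simpa [eq_neg_iff_add_eq_zero, add_comm] using hT 1
    have hfix : ∀ a, φ a = a := fun a => by
      have := hT a
      rw [hsmul, hy', smul_neg, ← sub_eq_add_neg, ← sub_smul, smul_eq_zero_iff_left hy0] at this
      exact (sub_eq_zero.mp this).symm
    exact ⟨y, hy, hy0, funext fun i => hfix (y i)⟩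

theorem Submodule.comp_mem_of_finrank_eq_one {ι : Type*} {L : Submodule K (ι → K)}
    (hL : finrank K L = 1) {x : ι → K} (hx : x ∈ L) (hx0 : x ≠ 0) (hfix : φ ∘ x = x) :
    ∀ v ∈ L, φ ∘ v ∈ L := by
  intro v hv
  obtain ⟨c, hc⟩ :=
    (finrank_eq_one_iff_of_nonzero' (⟨x, hx⟩ : L) (by simpa using hx0)).mp hL ⟨v, hv⟩
  have hv : v = c • x := by simpa using congrArg Subtype.val hc.symm
  have : φ ∘ v = φ c • x := by
    ext i
    simp [hv, show φ (x i) = x i from congrFun hfix i]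
  exact this ▸ L.smul_mem _ hx

end Involution

theorem exists_ringHom_eq_pow_of_isPrimePow_dvd_card {F : Type*} [Field F] [Fintype F] {q : ℕ}
    (hq : IsPrimePow q) (hqF : q ∣ Fintype.card F) : ∃ φ : F →+* F, ∀ a, φ a = a ^ q := by
  obtain ⟨p, k, hp, hk, rfl⟩ := hq
  obtain ⟨r, hr, n, hrp, hcard⟩ := FiniteField.card' F
  have hpr : p = r := (Nat.prime_dvd_prime_iff_eq hp.nat_prime hrp).mp
    (hp.nat_prime.dvd_of_dvd_pow (hcard ▸ (dvd_pow_self p hk.ne').trans hqF))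
  subst hpr
  have := Fact.mk hrp
  exact ⟨iterateFrobenius F p k, fun a => rfl⟩

/-- Jin–Xing criterion: Let `A` be an `(n-1) × n` matrix over `F_{q^2}` of rank
`n-1`. Then `Ax = 0` has a nonzero solution `x` with all coordinates in `F_q` (the fixed field
of the Frobenius `x ↦ x^q`) if and only if `A^{(q)}` (entrywise `q`-th power) and `A` are row
equivalent, i.e. `A^{(q)} = M * A` for some invertible matrix `M`. -/
theorem kernel_vector_over_base_field_iff_row_equivalent
    (q n : ℕ) (hq : IsPrimePow q) (hn : 1 ≤ n)
    (F : Type) [Field F] [Fintype F] (hF : Fintype.card F = q ^ 2)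
    (A : Matrix (Fin (n - 1)) (Fin n) F) (hrank : A.rank = n - 1) :
    (∃ x : Fin n → F, x ≠ 0 ∧ (∀ i, (x i) ^ q = x i) ∧ A.mulVec x = 0) ↔
      (∃ M : Matrix (Fin (n - 1)) (Fin (n - 1)) F,
        IsUnit M ∧ A.map (fun e => e ^ q) = M * A) := by
  obtain ⟨φ, hφ⟩ :=
    exists_ringHom_eq_pow_of_isPrimePow_dvd_card hq (hF ▸ dvd_pow_self q two_ne_zero)
  have hφφ : Function.Involutive φ := fun a => by
    rw [hφ, hφ, ← pow_mul, ← sq, ← hF, FiniteField.pow_card]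
  have hker : finrank F (ker A.mulVecLin) = 1 := by
    have := A.mulVecLin.finrank_range_add_finrank_ker
    rw [← Matrix.rank, hrank, finrank_fin_fun] at this
    omega
  have hmap : A.map (fun e => e ^ q) = A.map φ := by simp only [← hφ]
  rw [hmap, exists_isUnit_mul_eq_iff_ker_mulVecLin_eq (by rw [hrank, Fintype.card_fin]),
    ker_mulVecLin_eq_ker_map_iff hφφ]
  constructor
  · rintro ⟨x, hx0, hfix, hAx⟩
    exact Submodule.comp_mem_of_finrank_eq_one hker hAx hx0 (funext fun i => (hφ _).trans (hfix i))
  · intro hstable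
    obtain ⟨x, hAx, hx0, hfix⟩ := Submodule.exists_ne_zero_comp_eq_self hφφ
      (fun h => by rw [h, finrank_bot] at hker; omega) hstable
    exact ⟨x, hx0, fun i => (hφ _).symm.trans (congrFun hfix i), hAx⟩
end

section
/- Let q = 2am − 1 be an odd prime power (a, m positive integers, m ≥ 3), ω a primitive element of F_{q^2}, and A the (m−2)×(m−1) matrix over F_{q^2} with entries A_{ij} = ω^{2j(m−3+(q−1)(i−1))} for 1 ≤ i ≤ m−2, 1 ≤ j ≤ m−1. Then A^{(q)} (entrywise q-th power of A) and A are row equivalent, and any m−2 columns of A form an invertible matrix. -/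
/-!
Write `A i j = y_j ^ (s + (q - 1) i)` with `y_j = ω ^ (2 (j + 1))` and `s = m - 3`. Since
`ω ^ (q² - 1) = 1`, raising to the `q`-th power sends the exponent `s + (q - 1) i` to
`s + (q - 1) (s - i)` modulo `q² - 1`, so `A^{(q)}` is `A` with its rows reversed. A square
submatrix of `A` is a Vandermonde matrix in the `y_j ^ (q - 1)` with columns scaled by the
nonzero `y_j ^ s`; the nodes `y_j ^ (q - 1) = ζ ^ (j + 1)` are distinct because
`ζ = ω ^ (2 (q - 1))` has order `(q² - 1) / (2 (q - 1)) = (q + 1) / 2 = a m > m - 1`.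
-/

open Matrix

def powMatrix {R ι : Type*} [Monoid R] (n : ℕ) (y : ι → R) (s t : ℕ) : Matrix (Fin n) ι R :=
  of fun i j => y j ^ (s + t * i)

theorem add_sub_one_mul_mul_eq {q s i k : ℕ} (hq : 1 ≤ q) (hik : i + k = s) :
    (s + (q - 1) * i) * q = s + (q - 1) * k + i * (q ^ 2 - 1) := by
  obtain ⟨p, rfl⟩ : ∃ p, q = p + 1 := ⟨q - 1, by omega⟩
  have hsq : (p + 1) ^ 2 - 1 = p ^ 2 + 2 * p := by
    rw [show (p + 1) ^ 2 = p ^ 2 + 2 * p + 1 by ring]; rfl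
  subst hik
  rw [Nat.add_sub_cancel, hsq]
  ring

theorem pow_add_sub_one_mul_pow_eq {M : Type*} [Monoid M] {x : M} {q s i k : ℕ} (hq : 1 ≤ q)
    (hx : x ^ (q ^ 2 - 1) = 1) (hik : i + k = s) :
    (x ^ (s + (q - 1) * i)) ^ q = x ^ (s + (q - 1) * k) := by
  rw [← pow_mul, add_sub_one_mul_mul_eq hq hik, pow_add, mul_comm i, pow_mul, hx, one_pow,
    mul_one]

theorem powMatrix_map_pow_eq_submatrix_rev {R ι : Type*} [Monoid R] {n q : ℕ} (hq : 1 ≤ q)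
    (y : ι → R) (hy : ∀ j, y j ^ (q ^ 2 - 1) = 1) :
    (powMatrix n y (n - 1) (q - 1)).map (· ^ q) =
      (powMatrix n y (n - 1) (q - 1)).submatrix Fin.rev id := by
  ext i j
  exact pow_add_sub_one_mul_pow_eq hq (hy j) (by simp only [Fin.val_rev]; omega)

theorem powMatrix_eq_vandermonde_transpose_mul_diagonal {R : Type*} [CommRing R] (n : ℕ)
    (y : Fin n → R) (s t : ℕ) :
    powMatrix n y s t = (vandermonde fun j => y j ^ t)ᵀ * diagonal fun j => y j ^ s := by
  ext i j
  simp only [powMatrix, of_apply, mul_diagonal, transpose_apply, vandermonde_apply]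
  rw [← pow_mul, ← pow_add, add_comm, mul_comm]

theorem isUnit_powMatrix {K : Type*} [Field K] {n : ℕ} {y : Fin n → K} (s t : ℕ)
    (hy : ∀ j, y j ≠ 0) (hinj : Function.Injective fun j => y j ^ t) :
    IsUnit (powMatrix n y s t) := by
  rw [isUnit_iff_isUnit_det, powMatrix_eq_vandermonde_transpose_mul_diagonal, det_mul,
    det_transpose, det_diagonal, isUnit_iff_ne_zero]
  exact mul_ne_zero (det_vandermonde_ne_zero_iff.mpr hinj)
    (Finset.prod_ne_zero_iff.mpr fun j _ => pow_ne_zero _ (hy j))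

theorem injective_pow_succ_of_lt_orderOf {G : Type*} [Monoid G] {x : G} {n : ℕ}
    (hn : n < orderOf x) : Function.Injective fun j : Fin n => x ^ ((j : ℕ) + 1) :=
  fun i j hij => Fin.ext <| Nat.succ_injective <|
    pow_injOn_Iio_orderOf (Set.mem_Iio.mpr (by omega)) (Set.mem_Iio.mpr (by omega)) hij

theorem isUnit_permMatrix {n R : Type*} [Fintype n] [DecidableEq n] [CommRing R]
    (σ : Equiv.Perm n) : IsUnit (σ.permMatrix R) := by
  simpa using (Group.isUnit σ⁻¹).map (permMatrixHom (n := n) (R := R))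

theorem matrix_row_equivalent_and_columns_invertible_even_case_general
    (q a m : ℕ) (ha : 0 < a) (hm : 3 ≤ m) (hq : q = 2 * a * m - 1)
    (F : Type) [Field F]
    (ω : F) (hω : orderOf ω = q ^ 2 - 1)
    (A : Matrix (Fin (m - 2)) (Fin (m - 1)) F)
    (hA : ∀ i j, A i j = ω ^ (2 * ((j : ℕ) + 1) * ((m - 3) + (q - 1) * (i : ℕ)))) :
    (∃ M : Matrix (Fin (m - 2)) (Fin (m - 2)) F,
        IsUnit M ∧ A.map (fun e => e ^ q) = M * A) ∧
      (∀ cols : Fin (m - 2) → Fin (m - 1), Function.Injective cols →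
        IsUnit (Matrix.of fun i i' : Fin (m - 2) => A i (cols i'))) := by
  have hmam : m ≤ a * m := Nat.le_mul_of_pos_left m ha
  have hq1 : q + 1 = 2 * (a * m) := by rw [hq, mul_assoc]; omega
  have hqsq : q ^ 2 - 1 = 2 * (q - 1) * (a * m) := by
    rw [mul_right_comm, ← hq1, ← Nat.sq_sub_sq, one_pow]
  have hqsq0 : q ^ 2 - 1 ≠ 0 := by
    rw [hqsq]; exact mul_ne_zero (by omega) (by omega)
  set y : Fin (m - 1) → F := fun j => ω ^ (2 * ((j : ℕ) + 1))
  have hAy : A = powMatrix (m - 2) y (m - 2 - 1) (q - 1) := by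
    ext i j
    rw [hA, powMatrix, of_apply, ← pow_mul, show m - 2 - 1 = m - 3 by omega]
  have hy1 : ∀ j, y j ^ (q ^ 2 - 1) = 1 := fun j => by
    rw [← pow_mul, mul_comm, pow_mul, ← hω, pow_orderOf_eq_one, one_pow]
  have hy0 : ∀ j, y j ≠ 0 := fun j => (IsUnit.of_pow_eq_one (hy1 j) hqsq0).ne_zero
  have hζ : orderOf (ω ^ (2 * (q - 1))) = a * m := by
    rw [orderOf_pow_of_dvd (by omega) (by rw [hω, hqsq]; exact dvd_mul_right _ _), hω, hqsq,
      Nat.mul_div_cancel_left _ (by omega)]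
  have hyinj : Function.Injective fun j => y j ^ (q - 1) := by
    convert injective_pow_succ_of_lt_orderOf (x := ω ^ (2 * (q - 1))) (n := m - 1) (by omega)
      using 2 with j
    rw [← pow_mul, ← pow_mul]
    ring_nf
  refine ⟨⟨Fin.revPerm.permMatrix F, ?_, ?_⟩, fun cols hcols => ?_⟩
  · exact isUnit_permMatrix _
  · rw [PEquiv.toMatrix_toPEquiv_mul, hAy]
    exact powMatrix_map_pow_eq_submatrix_rev (by omega) y hy1
  · rw [hAy]
    exact isUnit_powMatrix _ _ (fun _ => hy0 _) (hyinj.comp hcols)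

/-- Let `q = 2am-1` be an odd prime power (`a, m` positive, `m ≥ 3`), `ω` a
primitive element of `F_{q^2}`, and `A` the `(m-2) × (m-1)` matrix with entries
`A i j = ω^{2j(m-3+(q-1)(i-1))}` (for `1 ≤ i ≤ m-2`, `1 ≤ j ≤ m-1`; here indices are 0-based).
Then `A^{(q)}` and `A` are row equivalent, and any `m-2` columns of `A` form an invertible
matrix. -/
theorem matrix_row_equivalent_and_columns_invertible_even_case
    (q a m : ℕ) (ha : 0 < a) (hm : 3 ≤ m) (hq : q = 2 * a * m - 1) (hpp : IsPrimePow q)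
    (hodd : Odd q)
    (F : Type) [Field F] [Fintype F] (hF : Fintype.card F = q ^ 2)
    (ω : F) (hω : orderOf ω = q ^ 2 - 1)
    (A : Matrix (Fin (m - 2)) (Fin (m - 1)) F)
    (hA : ∀ i j, A i j = ω ^ (2 * ((j : ℕ) + 1) * ((m - 3) + (q - 1) * (i : ℕ)))) :
    (∃ M : Matrix (Fin (m - 2)) (Fin (m - 2)) F,
        IsUnit M ∧ A.map (fun e => e ^ q) = M * A) ∧
      (∀ cols : Fin (m - 2) → Fin (m - 1), Function.Injective cols →
        IsUnit (Matrix.of fun i i' : Fin (m - 2) => A i (cols i'))) :=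
  matrix_row_equivalent_and_columns_invertible_even_case_general q a m ha hm hq F ω hω A hA
end

section
/- Let q = (2a+1)m − 1 be an odd prime power with a ≥ 0, m positive integers, and let j, l be integers with 0 ≤ j, l ≤ (a+1)m − 3. If qj + l + 1 = t(q−1) for a nonnegative integer t, then t mod m ∉ {0, m−1}. -/
/-- Let `q = (2a+1)m - 1` be an odd prime power with `a ≥ 0`, `m` positive, and
`0 ≤ j, l ≤ (a+1)m - 3`. If `qj + l + 1 = t(q-1)` for a nonnegative integer `t`, then
`t mod m ∉ {0, m-1}`. -/
theorem key_divisibility_lemma_odd_case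
    (q a m : ℕ) (hm : 0 < m) (hq : q = (2 * a + 1) * m - 1) (hpp : IsPrimePow q)
    (hodd : Odd q)
    (j l t : ℕ) (hj : j ≤ (a + 1) * m - 3) (hl : l ≤ (a + 1) * m - 3)
    (ht : q * j + l + 1 = t * (q - 1)) :
    t % m ≠ 0 ∧ t % m ≠ m - 1 := by
  have hq2 : 2 ≤ q := hpp.two_le
  have hq3 : 3 ≤ q := by
    rcases hodd with ⟨k, hk⟩; omega
  -- m is even, hence m ≥ 2
  have hme : m % 2 = 0 := by
    by_contra h
    have hmo : m % 2 = 1 := by omega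
    obtain ⟨c, hc⟩ : ∃ c, m = 2 * c + 1 := ⟨m / 2, by omega⟩
    rcases hodd with ⟨k, hk⟩
    have hexp : (2 * a + 1) * (2 * c + 1) = 2 * (2 * a * c + a + c) + 1 := by ring
    rw [hc] at hq
    omega
  -- abbreviate P = a*m
  have hB : (2 * a + 1) * m = 2 * (a * m) + m := by ring
  have hA : (a + 1) * m = a * m + m := by ring
  set P := a * m with hP
  rw [hB] at hq
  rw [hA] at hj hl
  -- (a+1)*m ≥ 4
  have hPm : 4 ≤ P + m := by
    rcases Nat.eq_zero_or_pos a with h0 | h0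
    · have : P = 0 := by rw [hP, h0]; ring
      omega
    · have : m ≤ P := by
        rw [hP]
        exact Nat.le_mul_of_pos_left m h0
      omega
  set Q := q - 1 with hQdef
  have hQval : Q = 2 * P + m - 2 := by omega
  have hQ2 : 2 ≤ Q := by omega
  have e1 : q * j = Q * j + j := by
    have : q = Q + 1 := by omega
    rw [this]; ring
  have e2 : t * Q = Q * j + (j + l + 1) := by rw [← ht, e1]; ring
  have hjt : j < t := by
    by_contra h
    push_neg at h
    have h2 : t * Q ≤ j * Q := Nat.mul_le_mul_right Q h
    rw [mul_comm j Q] at h2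
    omega
  have e3 : (t - j) * Q = j + l + 1 := by
    have hrep : t = j + (t - j) := by omega
    rw [hrep, add_mul, mul_comm j Q] at e2
    exact Nat.add_left_cancel e2
  have hs1 : t - j = 1 := by
    by_contra h
    have h2 : 2 ≤ t - j := by omega
    have h3 : 2 * Q ≤ (t - j) * Q := Nat.mul_le_mul_right Q h2
    rw [e3] at h3
    omega
  rw [hs1, one_mul] at e3
  -- now j + l + 1 = Q = 2P + m - 2, so P ≤ j ≤ P + m - 3, t = j + 1
  have hjP : P ≤ j := by omega
  have htval : t = j + 1 := by omega
  have hrep : t = a * m + (t - P) := by rw [← hP]; omega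
  have hmod : t % m = t - P := by
    conv_lhs => rw [hrep]
    rw [mul_comm a m, Nat.mul_add_mod]
    exact Nat.mod_eq_of_lt (by omega)
  omega
end

section
/- Let C_1,...,C_s be linear codes of length m over F_q and A a nonsingular s×s matrix over F_q. Then the Euclidean dual of the matrix-product code [C_1,...,C_s]·A equals [C_1^⊥,...,C_s^⊥]·(A^{-1})^t. -/
open Matrix

set_option maxHeartbeats 1000000

/-- The matrix-product code `[C_1,...,C_s]·A`, as a subset of `F^{l·m}` indexed by
`Fin l × Fin m`: codewords are the concatenations `(∑ i, A i 1 • c_i, ..., ∑ i, A i l • c_i)`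
with `c_i ∈ C_i`. -/
def matrixProductCode {F : Type} [Field F] {s l m : ℕ}
    (C : Fin s → Set (Fin m → F)) (A : Matrix (Fin s) (Fin l) F) :
    Set (Fin l × Fin m → F) :=
  {x | ∃ c : Fin s → Fin m → F, (∀ i, c i ∈ C i) ∧ ∀ j r, x (j, r) = ∑ i, A i j * c i r}

/-- For linear codes `C_1,...,C_s` of length `m` over `F_q` and a nonsingular
`s × s` matrix `A`, the Euclidean dual of `[C_1,...,C_s]·A` equals
`[C_1^⊥,...,C_s^⊥]·(A⁻¹)ᵗ`. -/
theorem matrixProduct_dual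
    (Q s m : ℕ) (hQ : IsPrimePow Q)
    (F : Type) [Field F] [Fintype F] (hF : Fintype.card F = Q)
    (C : Fin s → Submodule F (Fin m → F))
    (A : Matrix (Fin s) (Fin s) F) (hA : IsUnit A) :
    {x : Fin s × Fin m → F |
        ∀ y ∈ matrixProductCode (fun i => (C i : Set (Fin m → F))) A, ∑ p, x p * y p = 0} =
      matrixProductCode
        (fun i => {x : Fin m → F | ∀ y ∈ C i, ∑ r, x r * y r = 0}) (A⁻¹)ᵀ := by
  have hdet : IsUnit A.det := (Matrix.isUnit_iff_isUnit_det A).mp hA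
  have hAiA : A⁻¹ * A = 1 := Matrix.nonsing_inv_mul A hdet
  have hAAi : A * A⁻¹ = 1 := Matrix.mul_nonsing_inv A hdet
  ext x
  simp only [Set.mem_setOf_eq, matrixProductCode]
  constructor
  · intro h
    refine ⟨fun i r => ∑ j, A i j * x (j, r), fun i => ?_, fun j r => ?_⟩
    · intro y hy
      have hword : ∃ c : Fin s → Fin m → F, (∀ i, c i ∈ (C i : Set (Fin m → F))) ∧
          ∀ j r, (fun p : Fin s × Fin m => A i p.1 * y p.2) (j, r) = ∑ i', A i' j * c i' r := by
        refine ⟨fun i' => if i' = i then y else 0, fun i' => ?_, fun j r => ?_⟩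
        · by_cases hii : i' = i
          · simpa [hii] using hy
          · simp [hii, (C i').zero_mem]
        · rw [Finset.sum_eq_single i]
          · simp
          · intro b _ hb; simp [hb]
          · intro hb; exact absurd (Finset.mem_univ i) hb
      have h0 := h (fun p : Fin s × Fin m => A i p.1 * y p.2) hword
      calc ∑ r, (∑ j, A i j * x (j, r)) * y r
          = ∑ r, ∑ j, x (j, r) * (A i j * y r) := by
            refine Finset.sum_congr rfl fun r _ => ?_
            rw [Finset.sum_mul]
            exact Finset.sum_congr rfl fun j _ => by ring
        _ = ∑ j, ∑ r, x (j, r) * (A i j * y r) := Finset.sum_comm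
        _ = ∑ p : Fin s × Fin m, x p * (A i p.1 * y p.2) :=
            (Fintype.sum_prod_type (fun p : Fin s × Fin m => x p * (A i p.1 * y p.2))).symm
        _ = 0 := h0
    · calc x (j, r)
          = ∑ j', (1 : Matrix (Fin s) (Fin s) F) j j' * x (j', r) := by
            simp [Matrix.one_apply]
        _ = ∑ j', (∑ i, A⁻¹ j i * A i j') * x (j', r) := by
            refine Finset.sum_congr rfl fun j' _ => ?_
            rw [← Matrix.mul_apply, hAiA]
        _ = ∑ j', ∑ i, A⁻¹ j i * A i j' * x (j', r) := by
            refine Finset.sum_congr rfl fun j' _ => Finset.sum_mul _ _ _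
        _ = ∑ i, ∑ j', A⁻¹ j i * A i j' * x (j', r) := Finset.sum_comm
        _ = ∑ i, (A⁻¹)ᵀ i j * ∑ j', A i j' * x (j', r) := by
            refine Finset.sum_congr rfl fun i _ => ?_
            rw [Matrix.transpose_apply, Finset.mul_sum]
            exact Finset.sum_congr rfl fun j' _ => by ring
  · rintro ⟨d, hd1, hd2⟩ y ⟨c, hc1, hc2⟩
    have key : ∀ r, ∑ j, x (j, r) * y (j, r) = ∑ i, d i r * c i r := by
      intro r
      calc ∑ j, x (j, r) * y (j, r)
          = ∑ j, ∑ i, ∑ i', (A i' j * A⁻¹ j i) * (d i r * c i' r) := by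
            refine Finset.sum_congr rfl fun j _ => ?_
            rw [hd2 j r, hc2 j r, Finset.sum_mul]
            refine Finset.sum_congr rfl fun i _ => ?_
            rw [Finset.mul_sum]
            refine Finset.sum_congr rfl fun i' _ => ?_
            rw [Matrix.transpose_apply]; ring
        _ = ∑ i, ∑ i', ∑ j, (A i' j * A⁻¹ j i) * (d i r * c i' r) := by
            rw [Finset.sum_comm]
            exact Finset.sum_congr rfl fun i _ => Finset.sum_comm
        _ = ∑ i, ∑ i', (A * A⁻¹) i' i * (d i r * c i' r) := by
            refine Finset.sum_congr rfl fun i _ => Finset.sum_congr rfl fun i' _ => ?_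
            rw [Matrix.mul_apply, Finset.sum_mul]
        _ = ∑ i, d i r * c i r := by
            rw [hAAi]
            refine Finset.sum_congr rfl fun i _ => ?_
            simp [Matrix.one_apply]
    calc ∑ p : Fin s × Fin m, x p * y p
        = ∑ r, ∑ j, x (j, r) * y (j, r) := Fintype.sum_prod_type_right (fun p : Fin s × Fin m => x p * y p)
      _ = ∑ r, ∑ i, d i r * c i r := Finset.sum_congr rfl fun r _ => key r
      _ = ∑ i, ∑ r, d i r * c i r := Finset.sum_comm
      _ = 0 := Finset.sum_eq_zero fun i _ => hd1 i (c i) (hc1 i)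
end

section
/- Let C_1,...,C_s be [m, k_i, d_i] linear codes over F_q and A a full-rank s×l matrix over F_q (s ≤ l). Then the matrix-product code [C_1,...,C_s]·A has length ml, dimension Σ k_i, and minimum distance at least min_{1≤i≤s} {d_i δ_i}, where δ_i is the minimum distance of the code in F_q^l generated by the first i rows of A. -/
open Matrix

/-!
Arrange a codeword of `[C_1,...,C_s]·A` as an `l × m` array: its column `r` is `v_r A`, where
`v_r = (c_1 r, ..., c_s r)`. Since the rows of `A` are independent, the map `c ↦ codeword` is
injective, which gives the dimension. For the distance, let `t` be the last index with
`c_t ≠ 0`: every column `r` in the support of `c_t` is a nonzero vector of the code spanned by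
the first `t` rows of `A`, so it has weight at least `δ_t`, and there are at least `d_t` such
columns.
-/

theorem hammingNorm_prod_eq_sum {α β M : Type*} [Fintype α] [Fintype β] [Zero M]
    [DecidableEq M] (x : α × β → M) :
    hammingNorm x = ∑ b, hammingNorm fun a => x (a, b) := by
  simp only [hammingNorm, Finset.card_filter]
  rw [← Finset.univ_product_univ, Finset.sum_product, Finset.sum_comm]

theorem exists_ne_zero_forall_lt_eq_zero {σ M : Type*} [Fintype σ] [LinearOrder σ] [Zero M]
    {f : σ → M} (hf : f ≠ 0) : ∃ t, f t ≠ 0 ∧ ∀ i, t < i → f i = 0 := by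
  classical
  obtain ⟨i₀, hi₀⟩ := Function.ne_iff.mp hf
  obtain ⟨t, ht, hmax⟩ := Finset.exists_max_image (Finset.univ.filter (f · ≠ 0)) id
    ⟨i₀, Finset.mem_filter.mpr ⟨Finset.mem_univ _, hi₀⟩⟩
  refine ⟨t, (Finset.mem_filter.mp ht).2, fun i hti => ?_⟩
  by_contra hi
  exact (hmax i (Finset.mem_filter.mpr ⟨Finset.mem_univ _, hi⟩)).not_gt hti

theorem Matrix.linearIndependent_row_of_rank_eq_card {F σ κ : Type*} [Field F] [Fintype σ]
    [Fintype κ] {A : Matrix σ κ F} (hA : A.rank = Fintype.card σ) :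
    LinearIndependent F A.row := by
  rw [linearIndependent_iff_card_eq_finrank_span, Set.finrank, ← rank_eq_finrank_span_row,
    hA]

section MatrixProduct

variable {R σ κ ι : Type*} [CommRing R] [Fintype σ] (A : Matrix σ κ R)

theorem Matrix.vecMul_mem_span_rows_of_forall_lt_eq_zero [LinearOrder σ] {v : σ → R} {t : σ}
    (hv : ∀ i, t < i → v i = 0) : v ᵥ* A ∈ Submodule.span R {r | ∃ i ≤ t, r = A i} := by
  rw [vecMul_eq_sum]
  refine Submodule.sum_mem _ fun i _ => ?_
  rcases le_or_gt i t with hit | hti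
  · exact Submodule.smul_mem _ _ (Submodule.subset_span ⟨i, hit, rfl⟩)
  · rw [hv i hti, zero_smul]
    exact Submodule.zero_mem _

def matrixProductMap : (σ → ι → R) →ₗ[R] (κ × ι → R) where
  toFun c p := ((fun i => c i p.2) ᵥ* A) p.1
  map_add' c c' :=
    funext fun p => congrFun (add_vecMul A (fun i => c i p.2) (fun i => c' i p.2)) p.1
  map_smul' a c := funext fun p => congrFun (smul_vecMul a (fun i => c i p.2) A) p.1

theorem matrixProductMap_column (c : σ → ι → R) (r : ι) :
    (fun j => matrixProductMap A c (j, r)) = (fun i => c i r) ᵥ* A :=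
  rfl

def matrixProductSubmodule (C : σ → Submodule R (ι → R)) : Submodule R (κ × ι → R) :=
  LinearMap.range (matrixProductMap A ∘ₗ LinearMap.piMap fun i => (C i).subtype)

variable {A}

theorem matrixProductMap_injective (hA : LinearIndependent R A.row) :
    Function.Injective (matrixProductMap (ι := ι) A) := by
  intro c c' h
  ext i r
  have hcol := congrArg (fun x => fun j => x (j, r)) h
  simp only [matrixProductMap_column] at hcol
  exact congrFun (vecMul_injective_iff.mpr hA hcol) i

theorem hammingNorm_mul_le_hammingNorm_matrixProductMap [LinearOrder σ] [Fintype κ]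
    [Fintype ι] [DecidableEq R] (hA : LinearIndependent R A.row) {c : σ → ι → R} {t : σ}
    (ht : ∀ i, t < i → c i = 0) {δ : ℕ}
    (hδ : ∀ x ∈ Submodule.span R {r | ∃ i ≤ t, r = A i}, x ≠ 0 →
      δ ≤ hammingNorm x) :
    hammingNorm (c t) * δ ≤ hammingNorm (matrixProductMap A c) := by
  set S := Finset.univ.filter fun r => c t r ≠ 0
  have hcol : ∀ r ∈ S, δ ≤ hammingNorm fun j => matrixProductMap A c (j, r) := by
    intro r hr
    rw [matrixProductMap_column]
    refine hδ _ (A.vecMul_mem_span_rows_of_forall_lt_eq_zero fun i hi => congrFun (ht i hi) r) ?_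
    rw [← zero_vecMul A]
    refine (vecMul_injective_iff.mpr hA).ne fun h0 => ?_
    exact (Finset.mem_filter.mp hr).2 (congrFun h0 t)
  calc hammingNorm (c t) * δ = ∑ _r ∈ S, δ := by rw [Finset.sum_const, smul_eq_mul]; rfl
    _ ≤ ∑ r ∈ S, hammingNorm fun j => matrixProductMap A c (j, r) := Finset.sum_le_sum hcol
    _ ≤ ∑ r, hammingNorm fun j => matrixProductMap A c (j, r) :=
        Finset.sum_le_sum_of_subset (Finset.subset_univ S)
    _ = hammingNorm (matrixProductMap A c) := (hammingNorm_prod_eq_sum _).symm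

theorem mem_matrixProductSubmodule {C : σ → Submodule R (ι → R)} {x : κ × ι → R} :
    x ∈ matrixProductSubmodule A C ↔
      ∃ c : σ → ι → R, (∀ i, c i ∈ C i) ∧ matrixProductMap A c = x :=
  ⟨fun ⟨c, hc⟩ => ⟨fun i => c i, fun i => (c i).2, hc⟩,
    fun ⟨c, hc, hx⟩ => ⟨fun i => ⟨c i, hc i⟩, hx⟩⟩

theorem exists_mul_le_hammingNorm_of_mem_matrixProductSubmodule [LinearOrder σ] [Fintype κ]
    [Fintype ι] [DecidableEq R] (hA : LinearIndependent R A.row)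
    {C : σ → Submodule R (ι → R)} {d δ : σ → ℕ}
    (hd : ∀ i, ∀ x ∈ C i, x ≠ 0 → d i ≤ hammingNorm x)
    (hδ : ∀ i, ∀ x ∈ Submodule.span R {r | ∃ i' ≤ i, r = A i'}, x ≠ 0 →
      δ i ≤ hammingNorm x)
    {x : κ × ι → R} (hx : x ∈ matrixProductSubmodule A C) (hx0 : x ≠ 0) :
    ∃ t, d t * δ t ≤ hammingNorm x := by
  obtain ⟨c, hc, rfl⟩ := mem_matrixProductSubmodule.mp hx
  have hc0 : c ≠ 0 := by rintro rfl; exact hx0 (map_zero _)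
  obtain ⟨t, hct, ht⟩ := exists_ne_zero_forall_lt_eq_zero hc0
  exact ⟨t, (Nat.mul_le_mul_right _ (hd t _ (hc t) hct)).trans
    (hammingNorm_mul_le_hammingNorm_matrixProductMap hA ht (hδ t))⟩

end MatrixProduct

theorem finrank_matrixProductSubmodule {F σ κ ι : Type*} [Field F] [Fintype σ] [Fintype ι]
    {A : Matrix σ κ F} (hA : LinearIndependent F A.row) (C : σ → Submodule F (ι → F)) :
    Module.finrank F (matrixProductSubmodule A C) = ∑ i, Module.finrank F (C i) := by
  rw [matrixProductSubmodule, LinearMap.finrank_range_of_inj, Module.finrank_pi_fintype]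
  exact (matrixProductMap_injective hA).comp
    (Function.Injective.piMap fun i => (C i).injective_subtype)

theorem coe_matrixProductSubmodule {F : Type} [Field F] {s l m : ℕ}
    (A : Matrix (Fin s) (Fin l) F) (C : Fin s → Submodule F (Fin m → F)) :
    (matrixProductSubmodule A C : Set (Fin l × Fin m → F)) =
      matrixProductCode (fun i => (C i : Set (Fin m → F))) A := by
  ext x
  simp only [SetLike.mem_coe, mem_matrixProductSubmodule, matrixProductCode, Set.mem_ofPred_eq,
    funext_iff, Prod.forall, matrixProductMap, LinearMap.coe_mk, AddHom.coe_mk, vecMul,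
    dotProduct, mul_comm, eq_comm]

theorem matrixProduct_parameters_general
    (s l m : ℕ) (hs : 0 < s)
    (F : Type) [Field F] [DecidableEq F]
    (C : Fin s → Submodule F (Fin m → F))
    (k d : Fin s → ℕ)
    (hk : ∀ i, Module.finrank F (C i) = k i)
    (hd : ∀ i, (∀ x ∈ C i, x ≠ 0 → d i ≤ hammingNorm x) ∧
      (∃ x ∈ C i, x ≠ 0 ∧ hammingNorm x = d i))
    (A : Matrix (Fin s) (Fin l) F) (hA : A.rank = s)
    (δ : Fin s → ℕ)
    (hδ : ∀ i : Fin s,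
      (∀ x ∈ Submodule.span F {r : Fin l → F | ∃ i' ≤ i, r = A i'}, x ≠ 0 →
        δ i ≤ hammingNorm x) ∧
      (∃ x ∈ Submodule.span F {r : Fin l → F | ∃ i' ≤ i, r = A i'},
        x ≠ 0 ∧ hammingNorm x = δ i)) :
    ∃ D : Submodule F (Fin l × Fin m → F),
      (D : Set (Fin l × Fin m → F)) =
          matrixProductCode (fun i => (C i : Set (Fin m → F))) A ∧
        Module.finrank F D = ∑ i, k i ∧
        (∀ x ∈ D, x ≠ 0 →
          (Finset.univ.inf' (Finset.univ_nonempty_iff.mpr ⟨⟨0, hs⟩⟩)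
            fun i => d i * δ i) ≤ hammingNorm x) := by
  have hA' : LinearIndependent F A.row :=
    linearIndependent_row_of_rank_eq_card (by rw [hA, Fintype.card_fin])
  refine ⟨matrixProductSubmodule A C, coe_matrixProductSubmodule A C, ?_, fun x hx hx0 => ?_⟩
  · rw [finrank_matrixProductSubmodule hA', Finset.sum_congr rfl fun i _ => hk i]
  · obtain ⟨t, ht⟩ := exists_mul_le_hammingNorm_of_mem_matrixProductSubmodule hA'
      (fun i => (hd i).1) (fun i => (hδ i).1) hx hx0
    exact (Finset.inf'_le _ (Finset.mem_univ t)).trans ht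

/-- For `[m, k_i, d_i]` linear codes `C_i` over `F_q` and a full-rank `s × l`
matrix `A` (`s ≤ l`), the matrix-product code `[C_1,...,C_s]·A` is a linear code of length
`ml`, dimension `∑ k_i`, and minimum distance at least `min_{1≤i≤s} d_i δ_i`, where `δ_i` is
the minimum distance of the code in `F_q^l` generated by the first `i` rows of `A`. -/
theorem matrixProduct_parameters
    (Q s l m : ℕ) (hQ : IsPrimePow Q) (hs : 0 < s) (hsl : s ≤ l)
    (F : Type) [Field F] [Fintype F] [DecidableEq F] (hF : Fintype.card F = Q)
    (C : Fin s → Submodule F (Fin m → F))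
    (k d : Fin s → ℕ)
    (hk : ∀ i, Module.finrank F (C i) = k i)
    (hd : ∀ i, (∀ x ∈ C i, x ≠ 0 → d i ≤ hammingNorm x) ∧
      (∃ x ∈ C i, x ≠ 0 ∧ hammingNorm x = d i))
    (A : Matrix (Fin s) (Fin l) F) (hA : A.rank = s)
    (δ : Fin s → ℕ)
    (hδ : ∀ i : Fin s,
      (∀ x ∈ Submodule.span F {r : Fin l → F | ∃ i' ≤ i, r = A i'}, x ≠ 0 →
        δ i ≤ hammingNorm x) ∧
      (∃ x ∈ Submodule.span F {r : Fin l → F | ∃ i' ≤ i, r = A i'},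
        x ≠ 0 ∧ hammingNorm x = δ i)) :
    ∃ D : Submodule F (Fin l × Fin m → F),
      (D : Set (Fin l × Fin m → F)) =
          matrixProductCode (fun i => (C i : Set (Fin m → F))) A ∧
        Module.finrank F D = ∑ i, k i ∧
        (∀ x ∈ D, x ≠ 0 →
          (Finset.univ.inf' (Finset.univ_nonempty_iff.mpr ⟨⟨0, hs⟩⟩)
            fun i => d i * δ i) ≤ hammingNorm x) :=
  matrixProduct_parameters_general s l m hs F C k d hk hd A hA δ hδ
end

section
/- Let q be a prime power and A a nonsingular s×s matrix over F_{q^2} such that A^{(q)} (entrywise q-th power) is also nonsingular. If C_1,...,C_s are linear codes of length m over F_{q^2} with C_i^{⊥H} ⊆ C_i for each i, then ([C_1,...,C_s]·A)^{⊥H} ⊆ [C_1,...,C_s]·[(A^{(q)})^{-1}]^t. -/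
open Matrix

/-- The Hermitian dual of a code over `F_{q^2}`, with respect to `⟨x,y⟩_H = ∑ x_i y_i^q`. -/
def hermDual {F : Type} [Field F] {ι : Type} [Fintype ι] (q : ℕ) (C : Set (ι → F)) :
    Set (ι → F) :=
  {x | ∀ y ∈ C, ∑ i, x i * (y i) ^ q = 0}

/-- Over a finite field of order `q^2` with `q` a prime power, the `q`-th power map is
additive on finite sums. -/
lemma aux_sum_pow_q {F : Type} [Field F] [Fintype F] {q : ℕ} (hq : IsPrimePow q)
    (hF : Fintype.card F = q ^ 2) {ι : Type} (t : Finset ι) (f : ι → F) :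
    (∑ i ∈ t, f i) ^ q = ∑ i ∈ t, (f i) ^ q := by
  obtain ⟨p, n, hp, hn, rfl⟩ := hq
  have hp' : p.Prime := hp.nat_prime
  haveI : Fact p.Prime := ⟨hp'⟩
  -- establish CharP F p
  obtain ⟨r, hr⟩ := CharP.exists F
  haveI := hr
  haveI : Fact r.Prime := ⟨CharP.char_is_prime F r⟩
  obtain ⟨k, hk⟩ := FiniteField.card F r
  have hrp : r = p := by
    have hdvd : r ∣ (p ^ n) ^ 2 := by
      rw [← hF, hk.2]; exact dvd_pow_self r k.pos.ne'
    have : r ∣ p := (Fact.out : r.Prime).dvd_of_dvd_pow ((Fact.out : r.Prime).dvd_of_dvd_pow hdvd)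
    exact (Nat.prime_dvd_prime_iff_eq Fact.out hp').mp this
  subst hrp
  haveI : ExpChar F r := ExpChar.prime hp'
  exact sum_pow_char_pow r n t f

/-- Let `A` be a nonsingular `s × s` matrix over `F_{q^2}` such that `A^{(q)}`
(entrywise `q`-th power) is also nonsingular. If `C_1,...,C_s` are linear codes of length `m`
over `F_{q^2}` with `C_i^{⊥H} ⊆ C_i`, then
`([C_1,...,C_s]·A)^{⊥H} ⊆ [C_1,...,C_s]·[(A^{(q)})⁻¹]ᵗ`. -/
theorem matrixProduct_hermitian_dual_containing
    (q s m : ℕ) (hq : IsPrimePow q)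
    (F : Type) [Field F] [Fintype F] (hF : Fintype.card F = q ^ 2)
    (A : Matrix (Fin s) (Fin s) F) (hA : IsUnit A)
    (hAq : IsUnit (A.map (fun e => e ^ q)))
    (C : Fin s → Submodule F (Fin m → F))
    (hC : ∀ i, hermDual q (C i : Set (Fin m → F)) ⊆ (C i : Set (Fin m → F))) :
    hermDual q (matrixProductCode (fun i => (C i : Set (Fin m → F))) A) ⊆
      matrixProductCode (fun i => (C i : Set (Fin m → F)))
        ((A.map (fun e => e ^ q))⁻¹)ᵀ := by
  intro x hx
  set Aq : Matrix (Fin s) (Fin s) F := A.map (fun e => e ^ q) with hAqdef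
  have hAqdet : IsUnit Aq.det := (Matrix.isUnit_iff_isUnit_det Aq).mp hAq
  refine ⟨fun i r => ∑ j, Aq i j * x (j, r), fun i => hC i ?_, ?_⟩
  · -- c i ∈ hermDual (C i)
    intro y hy
    -- the codeword z(j,r) = A i j * y r belongs to the matrix-product code
    have hz : (fun jr : Fin s × Fin m => A i jr.1 * y jr.2) ∈
        matrixProductCode (fun i => (C i : Set (Fin m → F))) A := by
      refine ⟨fun k => if k = i then y else 0, fun k => ?_, fun j r => ?_⟩
      · by_cases h : k = i
        · subst h; simp [hy]
        · simp [h, Submodule.zero_mem]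
      · rw [Finset.sum_eq_single i]
        · simp
        · intro b _ hb; simp [hb]
        · simp
    have h0 := hx _ hz
    rw [Fintype.sum_prod_type] at h0
    calc ∑ r, (∑ j, Aq i j * x (j, r)) * y r ^ q
        = ∑ j, ∑ r, x (j, r) * (A i j * y r) ^ q := by
          rw [Finset.sum_comm]
          refine Finset.sum_congr rfl fun r _ => ?_
          rw [Finset.sum_mul]
          refine Finset.sum_congr rfl fun j _ => ?_
          simp only [hAqdef, Matrix.map_apply, mul_pow]
          ring
      _ = 0 := h0
  · -- the matrix identity
    intro j r
    have hinv : Aq⁻¹ * Aq = 1 := Matrix.nonsing_inv_mul Aq hAqdet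
    calc x (j, r)
        = ∑ k, (1 : Matrix (Fin s) (Fin s) F) j k * x (k, r) := by
          simp [Matrix.one_apply]
      _ = ∑ k, (∑ i, Aq⁻¹ j i * Aq i k) * x (k, r) := by
          rw [← hinv]; rfl
      _ = ∑ i, (Aq⁻¹)ᵀ i j * ∑ k, Aq i k * x (k, r) := by
          simp_rw [Finset.sum_mul, Finset.mul_sum, Matrix.transpose_apply]
          rw [Finset.sum_comm]
          exact Finset.sum_congr rfl fun i _ => Finset.sum_congr rfl fun k _ => by ring
end

section
/- Let q = p^t be an odd prime power. If C_1, C_2 are linear codes over F_{q^2} with parameters [n, k_1, d_1] and [n, k_2, d_2] satisfying C_i^{⊥H} ⊆ C_i for i = 1, 2, then the matrix-product code [C_1,C_2]·A with A = [[1,1],[1,p−1]] is a Hermitian dual-containing linear code over F_{q^2} with parameters [2n, k_1+k_2, ≥ min{2d_1, d_2}]. -/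
open Matrix

/-- Let `q = p^t` be an odd prime power. If `C_1, C_2` are `[n,k_1,d_1]` and
`[n,k_2,d_2]` linear codes over `F_{q^2}` with `C_i^{⊥H} ⊆ C_i`, then
`[C_1,C_2]·A` with `A = [[1,1],[1,p-1]]` is a Hermitian dual-containing linear code over
`F_{q^2}` with parameters `[2n, k_1+k_2, ≥ min{2d_1, d_2}]`. -/
theorem matrixProduct_hermitian_dual_containing_two_codes
    (p t q n : ℕ) (hp : p.Prime) (hodd : Odd p) (ht : 0 < t) (hq : q = p ^ t)
    (F : Type) [Field F] [Fintype F] [DecidableEq F] (hF : Fintype.card F = q ^ 2)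
    (C₁ C₂ : Submodule F (Fin n → F)) (k₁ k₂ d₁ d₂ : ℕ)
    (hk₁ : Module.finrank F C₁ = k₁) (hk₂ : Module.finrank F C₂ = k₂)
    (hd₁ : (∀ x ∈ C₁, x ≠ 0 → d₁ ≤ hammingNorm x) ∧ ∃ x ∈ C₁, x ≠ 0 ∧ hammingNorm x = d₁)
    (hd₂ : (∀ x ∈ C₂, x ≠ 0 → d₂ ≤ hammingNorm x) ∧ ∃ x ∈ C₂, x ≠ 0 ∧ hammingNorm x = d₂)
    (hC₁ : hermDual q (C₁ : Set (Fin n → F)) ⊆ (C₁ : Set (Fin n → F)))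
    (hC₂ : hermDual q (C₂ : Set (Fin n → F)) ⊆ (C₂ : Set (Fin n → F)))
    (A : Matrix (Fin 2) (Fin 2) F)
    (hA : A = !![(1 : F), 1; 1, ((p - 1 : ℕ) : F)])
    (MP : Set (Fin 2 × Fin n → F))
    (hMP : MP = matrixProductCode (fun i : Fin 2 =>
      if i = 0 then (C₁ : Set (Fin n → F)) else (C₂ : Set (Fin n → F))) A) :
    (∃ D : Submodule F (Fin 2 × Fin n → F),
        (D : Set (Fin 2 × Fin n → F)) = MP ∧ Module.finrank F D = k₁ + k₂) ∧
      (∀ x ∈ MP, x ≠ 0 → min (2 * d₁) d₂ ≤ hammingNorm x) ∧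
      hermDual q MP ⊆ MP := by
  subst hq hA hMP
  haveI : Fact p.Prime := ⟨hp⟩
  -- characteristic of F is p
  have hchar : CharP F p := by
    obtain ⟨c, hc⟩ := CharP.exists F
    haveI := hc
    obtain ⟨m, hcprime, hcard⟩ := FiniteField.card F c
    have hcp : c = p := by
      have hdvd : c ∣ p ^ (t * 2) := by
        rw [← pow_mul] at hF
        rw [← hF, hcard]
        exact dvd_pow_self c m.pos.ne'
      exact ((Nat.prime_dvd_prime_iff_eq hcprime hp).mp
        (hcprime.dvd_of_dvd_pow hdvd))
    rwa [hcp] at hc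
  haveI := hchar
  have hpne2 : p ≠ 2 := by
    rintro rfl
    rw [Nat.odd_iff] at hodd
    omega
  have h2 : (2 : F) ≠ 0 := by
    intro h
    have := (CharP.cast_eq_zero_iff F p 2).mp h
    exact hpne2 ((Nat.prime_dvd_prime_iff_eq hp Nat.prime_two).mp this)
  have hpm1 : ((p - 1 : ℕ) : F) = -1 := by
    rw [Nat.cast_sub hp.one_le, CharP.cast_eq_zero, Nat.cast_one, zero_sub]
  have hqodd : Odd (p ^ t) := hodd.pow
  have hfrobadd : ∀ x y : F, (x + y) ^ p ^ t = x ^ p ^ t + y ^ p ^ t := fun x y =>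
    add_pow_char_pow x y p t
  have hfrobneg : ∀ y : F, (-y) ^ p ^ t = -(y ^ p ^ t) := fun y => hqodd.neg_pow y
  -- membership characterization
  have hMem : ∀ x : Fin 2 × Fin n → F,
      x ∈ matrixProductCode (fun i : Fin 2 =>
        if i = 0 then (C₁ : Set (Fin n → F)) else (C₂ : Set (Fin n → F)))
        !![(1 : F), 1; 1, ((p - 1 : ℕ) : F)] ↔
      ∃ a ∈ C₁, ∃ b ∈ C₂, (∀ r, x (0, r) = a r + b r) ∧ (∀ r, x (1, r) = a r - b r) := by
    intro x
    constructor
    · rintro ⟨c, hc, hx⟩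
      have h0 := hc 0
      have h1 := hc 1
      simp only [if_pos rfl] at h0
      simp only [if_neg (by decide : (1 : Fin 2) ≠ 0)] at h1
      refine ⟨c 0, h0, c 1, h1, fun r => ?_, fun r => ?_⟩
      · have := hx 0 r
        rw [this, Fin.sum_univ_two]
        simp
      · have := hx 1 r
        rw [this, Fin.sum_univ_two, hpm1]
        simp
        ring
    · rintro ⟨a, ha, b, hb, h0, h1⟩
      refine ⟨![a, b], fun i => ?_, fun j r => ?_⟩
      · fin_cases i <;> simp [ha, hb]
      · fin_cases j
        · rw [Fin.sum_univ_two]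
          simpa using h0 r
        · rw [Fin.sum_univ_two, hpm1]
          have := h1 r
          simp only [Matrix.cons_val_zero, Matrix.cons_val_one, Matrix.head_cons,
            Matrix.head_fin_const]
          simp
          rw [this]
          ring
  -- the linear map (a, b) ↦ (a + b, a - b)
  let L : ((Fin n → F) × (Fin n → F)) →ₗ[F] (Fin 2 × Fin n → F) :=
    { toFun := fun ab => fun jr => ab.1 jr.2 + (if jr.1 = 0 then ab.2 jr.2 else -ab.2 jr.2)
      map_add' := by
        intro u v
        funext jr
        by_cases h : jr.1 = 0 <;> simp [h] <;> ring
      map_smul' := by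
        intro m u
        funext jr
        by_cases h : jr.1 = 0 <;> simp [h] <;> ring }
    
  have hL0 : ∀ ab : (Fin n → F) × (Fin n → F), ∀ r, L ab (0, r) = ab.1 r + ab.2 r := by
    intro ab r; simp [L]
  have hL1 : ∀ ab : (Fin n → F) × (Fin n → F), ∀ r, L ab (1, r) = ab.1 r - ab.2 r := by
    intro ab r
    simp [L, sub_eq_add_neg]
  have hLinj : Function.Injective L := by
    intro u v h
    have key : ∀ r : Fin n, u.1 r = v.1 r ∧ u.2 r = v.2 r := by
      intro r
      have e0 : u.1 r + u.2 r = v.1 r + v.2 r := by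
        have := congrFun h (0, r)
        rwa [hL0, hL0] at this
      have e1 : u.1 r - u.2 r = v.1 r - v.2 r := by
        have := congrFun h (1, r)
        rwa [hL1, hL1] at this
      constructor
      · have : 2 * u.1 r = 2 * v.1 r := by linear_combination e0 + e1
        exact mul_left_cancel₀ h2 this
      · have : 2 * u.2 r = 2 * v.2 r := by linear_combination e0 - e1
        exact mul_left_cancel₀ h2 this
    have h1 : u.1 = v.1 := funext fun r => (key r).1
    have h2' : u.2 = v.2 := funext fun r => (key r).2
    exact Prod.ext h1 h2'
  refine ⟨⟨Submodule.map L (C₁.prod C₂), ?_, ?_⟩, ?_, ?_⟩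
  · -- set equality
    ext x
    simp only [SetLike.mem_coe, Submodule.mem_map, Submodule.mem_prod]
    rw [hMem x]
    constructor
    · rintro ⟨⟨a, b⟩, ⟨ha, hb⟩, rfl⟩
      exact ⟨a, ha, b, hb, fun r => hL0 (a, b) r, fun r => hL1 (a, b) r⟩
    · rintro ⟨a, ha, b, hb, h0, h1⟩
      refine ⟨(a, b), ⟨ha, hb⟩, funext fun jr => ?_⟩
      obtain ⟨j, r⟩ := jr
      fin_cases j
      · show L (a, b) (0, r) = x (0, r)
        rw [hL0 (a, b) r, h0 r]
      · show L (a, b) (1, r) = x (1, r)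
        rw [hL1 (a, b) r, h1 r]
  · -- finrank
    have e1 : (C₁.prod C₂) ≃ₗ[F] (C₁ × C₂) :=
      { toFun := fun x => (⟨x.1.1, x.2.1⟩, ⟨x.1.2, x.2.2⟩)
        invFun := fun y => ⟨(y.1.1, y.2.1), ⟨y.1.2, y.2.2⟩⟩
        map_add' := fun _ _ => rfl
        map_smul' := fun _ _ => rfl
        left_inv := fun _ => rfl
        right_inv := fun _ => rfl }
    have e2 := (Submodule.equivMapOfInjective L hLinj (C₁.prod C₂)).symm
    rw [e2.finrank_eq, e1.finrank_eq, Module.finrank_prod, hk₁, hk₂]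
  · -- distance bound
    intro x hx hxne
    obtain ⟨a, ha, b, hb, h0, h1⟩ := (hMem x).mp hx
    by_cases hbz : b = 0
    · subst hbz
      have hane : a ≠ 0 := by
        rintro rfl
        apply hxne
        funext jr
        obtain ⟨j, r⟩ := jr
        fin_cases j
        · simpa using h0 r
        · simpa using h1 r
      have hda := hd₁.1 a ha hane
      have hsub : (Finset.univ ×ˢ ({i | a i ≠ 0} : Finset (Fin n)) : Finset (Fin 2 × Fin n)) ⊆
          ({i | x i ≠ 0} : Finset (Fin 2 × Fin n)) := by
        intro jr hjr
        rw [Finset.mem_product] at hjr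
        obtain ⟨j, r⟩ := jr
        have har : a r ≠ 0 := by simpa using hjr.2
        simp only [Finset.mem_filter, Finset.mem_univ, true_and]
        fin_cases j
        · show x (0, r) ≠ 0
          rw [h0 r]; simpa using har
        · show x (1, r) ≠ 0
          rw [h1 r]; simpa using har
      have hcard := Finset.card_le_card hsub
      rw [Finset.card_product] at hcard
      simp only [Finset.card_univ, Fintype.card_fin] at hcard
      calc min (2 * d₁) d₂ ≤ 2 * d₁ := min_le_left _ _
        _ ≤ 2 * hammingNorm a := by omega
        _ ≤ hammingNorm x := by
            unfold hammingNorm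
            omega
    · -- b ≠ 0 : weight of x at least weight of b
      have hdb := hd₂.1 b hb hbz
      have hinj : ∀ r ∈ ({i | b i ≠ 0} : Finset (Fin n)),
          (if x (0, r) ≠ 0 then ((0 : Fin 2), r) else ((1 : Fin 2), r)) ∈
            ({i | x i ≠ 0} : Finset (Fin 2 × Fin n)) := by
        intro r hr
        have hbr : b r ≠ 0 := by simpa using hr
        by_cases hx0 : x (0, r) ≠ 0
        · simp only [if_pos hx0, Finset.mem_filter, Finset.mem_univ, true_and]
          exact hx0
        · push_neg at hx0
          have hx1 : x (1, r) ≠ 0 := by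
            intro hx1
            apply hbr
            have e0 : a r + b r = 0 := by rw [← h0 r]; exact hx0
            have e1 : a r - b r = 0 := by rw [← h1 r]; exact hx1
            have : 2 * b r = 0 := by linear_combination e0 - e1
            exact (mul_eq_zero.mp this).resolve_left h2
          simp only [hx0, ne_eq, not_true_eq_false, if_false, Finset.mem_filter,
            Finset.mem_univ, true_and]
          exact hx1
      have hcard : ({i | b i ≠ 0} : Finset (Fin n)).card ≤
          ({i | x i ≠ 0} : Finset (Fin 2 × Fin n)).card := by
        apply Finset.card_le_card_of_injOn
          (fun r => if x (0, r) ≠ 0 then ((0 : Fin 2), r) else ((1 : Fin 2), r)) hinj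
        intro r₁ _ r₂ _ hre
        have := congrArg Prod.snd hre
        simpa [apply_ite Prod.snd] using this
      calc min (2 * d₁) d₂ ≤ d₂ := min_le_right _ _
        _ ≤ hammingNorm b := hdb
        _ ≤ hammingNorm x := by unfold hammingNorm; omega
  · -- hermitian dual containing
    intro x hx
    have hx' : ∀ y ∈ matrixProductCode (fun i : Fin 2 =>
        if i = 0 then (C₁ : Set (Fin n → F)) else (C₂ : Set (Fin n → F)))
        !![(1 : F), 1; 1, ((p - 1 : ℕ) : F)],
        ∑ i : Fin 2 × Fin n, x i * (y i) ^ p ^ t = 0 := hx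
    set x₀ : Fin n → F := fun r => x (0, r) with hx₀
    set x₁ : Fin n → F := fun r => x (1, r) with hx₁
    have hpair : ∀ a ∈ C₁, ∀ b ∈ C₂,
        (∑ r, x₀ r * (a r + b r) ^ p ^ t) + (∑ r, x₁ r * (a r - b r) ^ p ^ t) = 0 := by
      intro a ha b hb
      have hy : (fun jr : Fin 2 × Fin n => a jr.2 +
          (if jr.1 = 0 then b jr.2 else -b jr.2)) ∈ matrixProductCode (fun i : Fin 2 =>
          if i = 0 then (C₁ : Set (Fin n → F)) else (C₂ : Set (Fin n → F)))
          !![(1 : F), 1; 1, ((p - 1 : ℕ) : F)] := by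
        rw [hMem]
        exact ⟨a, ha, b, hb, fun r => by simp, fun r => by simp [sub_eq_add_neg]⟩
      have := hx' _ hy
      rw [Fintype.sum_prod_type, Fin.sum_univ_two] at this
      simpa [sub_eq_add_neg] using this
    have hu : (x₀ + x₁) ∈ hermDual (p ^ t) (C₁ : Set (Fin n → F)) := by
      intro a ha
      have := hpair a ha 0 (zero_mem C₂)
      simp only [Pi.zero_apply, add_zero, sub_zero] at this
      rw [← this, ← Finset.sum_add_distrib]
      apply Finset.sum_congr rfl
      intro r _
      simp [add_mul]
    have hv : (x₀ - x₁) ∈ hermDual (p ^ t) (C₂ : Set (Fin n → F)) := by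
      intro b hb
      have := hpair 0 (zero_mem C₁) b hb
      simp only [Pi.zero_apply, zero_add, zero_sub] at this
      rw [← this, ← Finset.sum_add_distrib]
      apply Finset.sum_congr rfl
      intro r _
      rw [hfrobneg (b r)]
      simp only [Pi.sub_apply]
      ring
    have huC : (x₀ + x₁) ∈ C₁ := hC₁ hu
    have hvC : (x₀ - x₁) ∈ C₂ := hC₂ hv
    rw [hMem]
    refine ⟨(2 : F)⁻¹ • (x₀ + x₁), C₁.smul_mem _ huC,
      (2 : F)⁻¹ • (x₀ - x₁), C₂.smul_mem _ hvC, fun r => ?_, fun r => ?_⟩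
    · show x₀ r = _
      simp only [Pi.smul_apply, Pi.add_apply, Pi.sub_apply, smul_eq_mul]
      field_simp
      ring
    · show x₁ r = _
      simp only [Pi.smul_apply, Pi.add_apply, Pi.sub_apply, smul_eq_mul]
      field_simp
      ring
end
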